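/- arXiv:2505.20801 — 4 statements merged into one kernel-verified Lean document; each statement's English description precedes it below -/
import Mathlib

section
/- Let F ⊆ P₂(TX) be an MPVF whose barycentric projection br F is totally λ-dissipative. Let Φ, Ψ ∈ F and let γ ∈ Γ(x_♯Φ, x_♯Ψ). Define σ := ∫_{X×X} (δ_x ⊗ Φ_x) ⊗ (δ_y ⊗ Ψ_y) dγ(x,y) ∈ P(TX×TX), where (Φ_x)_{x∈X} and (Ψ_y)_{y∈X} are the disintegrations of Φ and Ψ with respect to their first (position) marginals. Then σ ∈ Γ(Φ,Ψ), the pushforward of σ under the two position projections (x,v,y,w) ↦ (x,y) equals γ, and ∫ ⟨x−y, v−w⟩ dσ(x,v,y,w) ≤ λ ∫ |x−y|² dγ(x,y). In particular, F is unconditionally λ-dissipative. -/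
/-!
Disintegrate `Φ` and `Ψ` along their positions and glue the fibres independently over `γ`. In the
fibre over `(x, y)` the velocities `v ∼ Φ_x` and `w ∼ Ψ_y` are independent and `⟨x - y, v - w⟩` is
affine in `(v, w)`, so integrating them out replaces `v` and `w` by the barycenters `br Φ (x)` and
`br Ψ (y)`. The resulting integral is the dissipativity integral of `br Φ` and `br Ψ` along the plan
`(x, y) ↦ ((x, br Φ (x)), (y, br Ψ (y)))` pushed forward by `γ`, which total `λ`-dissipativity of
`br F` bounds by `λ ∫ |x - y|² dγ`. Taking the disintegrations given by `condKernel` yields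
unconditional dissipativity.
-/

open MeasureTheory ProbabilityTheory
open scoped ENNReal

variable {X : Type*} [NormedAddCommGroup X] [InnerProductSpace ℝ X]
  [CompleteSpace X] [SecondCountableTopology X] [MeasurableSpace X] [BorelSpace X]

/-- Membership in the Wasserstein space `P₂(Y)`: a Borel probability measure with
finite second moment. -/
def MemP2 {Y : Type*} [NormedAddCommGroup Y] [MeasurableSpace Y] (μ : Measure Y) : Prop :=
  IsProbabilityMeasure μ ∧ Integrable (fun y => ‖y‖ ^ 2) μ

/-- A multivalued probability vector field (MPVF): a nonempty subset of `P₂(TX)`,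
where `TX = X × X` (position-velocity pairs). -/
def IsMPVF (F : Set (Measure (X × X))) : Prop :=
  F.Nonempty ∧ ∀ Φ ∈ F, MemP2 Φ

/-- Total `λ`-dissipativity of an MPVF: for all `Φ₀, Φ₁ ∈ F` and every coupling `ϑ`
of `Φ₀` and `Φ₁` (in variables `((x₀,v₀),(x₁,v₁))`) one has
`∫⟨v₁ − v₀, x₁ − x₀⟩ dϑ ≤ λ ∫ |x₁ − x₀|² dϑ`. -/
def TotallyDissipative (lam : ℝ) (F : Set (Measure (X × X))) : Prop :=
  ∀ Φ₀ ∈ F, ∀ Φ₁ ∈ F, ∀ ϑ : Measure ((X × X) × (X × X)),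
    ϑ.map Prod.fst = Φ₀ → ϑ.map Prod.snd = Φ₁ →
    (∫ p, (inner ℝ (p.2.2 - p.1.2) (p.2.1 - p.1.1) : ℝ) ∂ϑ) ≤
      lam * ∫ p, ‖p.2.1 - p.1.1‖ ^ 2 ∂ϑ

/-- The barycentric projection of `Φ` computed from a disintegration kernel `κ`:
the pushforward of the first marginal `μ = x_♯Φ` under `x ↦ (x, ∫ v dΦ_x(v))`. -/
noncomputable def brOf (Φ : Measure (X × X)) (κ : Kernel X X) : Measure (X × X) :=
  (Φ.map Prod.fst).map (fun x => (x, ∫ v, v ∂(κ x)))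

/-- The barycentric projection `br F` of an MPVF `F`: all measures `(i_X, br Φ)_♯(x_♯Φ)`
where `Φ ∈ F` and `br Φ` is the barycenter of (a disintegration of) `Φ`. -/
def brSet (F : Set (Measure (X × X))) : Set (Measure (X × X)) :=
  { Ψ | ∃ Φ ∈ F, ∃ κ : Kernel X X, IsMarkovKernel κ ∧
      (Φ.map Prod.fst).compProd κ = Φ ∧ Ψ = brOf Φ κ }

/-- Unconditional `λ`-dissipativity of an MPVF. -/
def UncondDissipative (lam : ℝ) (F : Set (Measure (X × X))) : Prop :=
  ∀ γ : Measure (X × X), MemP2 γ →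
    ∀ Φ₀ ∈ F, ∀ Φ₁ ∈ F,
      Φ₀.map Prod.fst = γ.map Prod.fst → Φ₁.map Prod.fst = γ.map Prod.snd →
      ∃ ϑ : Measure ((X × X) × (X × X)),
        ϑ.map Prod.fst = Φ₀ ∧ ϑ.map Prod.snd = Φ₁ ∧
        ϑ.map (fun p => (p.1.1, p.2.1)) = γ ∧
        (∫ p, (inner ℝ (p.2.2 - p.1.2) (p.2.1 - p.1.1) : ℝ) ∂ϑ) ≤
          lam * ∫ q, ‖q.2 - q.1‖ ^ 2 ∂γ

namespace MeasureTheory.Measure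

variable {α α' β : Type*} [MeasurableSpace α] [MeasurableSpace α'] [MeasurableSpace β]

lemma comp_comap (μ : Measure α) (κ : Kernel α' β) {f : α → α'} (hf : Measurable f) :
    κ.comap f hf ∘ₘ μ = κ ∘ₘ μ.map f := by
  rw [← deterministic_comp_eq_map hf, comp_assoc, Kernel.comp_deterministic_eq_comap]

lemma integral_bind {E : Type*} [NormedAddCommGroup E] [NormedSpace ℝ E] (μ : Measure α)
    [SFinite μ] (κ : Kernel α β) [IsSFiniteKernel κ] {f : β → E} (hf : Integrable f (κ ∘ₘ μ)) :
    ∫ b, f b ∂(κ ∘ₘ μ) = ∫ a, ∫ b, f b ∂κ a ∂μ := by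
  rw [comp_eq_comp_const_apply] at hf ⊢
  rw [Kernel.integral_comp hf, Kernel.const_apply]

end MeasureTheory.Measure

namespace ProbabilityTheory.Kernel

variable {α α' β β' : Type*} [MeasurableSpace α] [MeasurableSpace α'] [MeasurableSpace β]
  [MeasurableSpace β']

lemma map_fst_parallelComp (κ : Kernel α β) [IsSFiniteKernel κ] (η : Kernel α' β')
    [IsMarkovKernel η] : (κ ∥ₖ η).map Prod.fst = κ.comap Prod.fst measurable_fst := by
  ext1 x
  rw [map_apply _ measurable_fst, parallelComp_apply, Measure.map_fst_prod, comap_apply,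
    measure_univ, one_smul]

lemma map_snd_parallelComp (κ : Kernel α β) [IsMarkovKernel κ] (η : Kernel α' β')
    [IsSFiniteKernel η] : (κ ∥ₖ η).map Prod.snd = η.comap Prod.snd measurable_snd := by
  ext1 x
  rw [map_apply _ measurable_snd, parallelComp_apply, Measure.map_snd_prod, comap_apply,
    measure_univ, one_smul]

lemma map_prodMap_parallelComp {γ γ' : Type*} [MeasurableSpace γ] [MeasurableSpace γ']
    (κ : Kernel α β) [IsSFiniteKernel κ] (η : Kernel α' β') [IsSFiniteKernel η]
    {f : β → γ} (hf : Measurable f) {g : β' → γ'} (hg : Measurable g) :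
    (κ ∥ₖ η).map (Prod.map f g) = κ.map f ∥ₖ η.map g := by
  ext1 x
  rw [map_apply _ (hf.prodMap hg), parallelComp_apply, parallelComp_apply, map_apply _ hf,
    map_apply _ hg, Measure.map_prod_map _ _ hf hg]

lemma id_prod_apply (κ : Kernel α β) [IsSFiniteKernel κ] (a : α) :
    (Kernel.id ×ₖ κ) a = (Measure.dirac a).prod (κ a) := by
  rw [prod_apply, id_apply]

end ProbabilityTheory.Kernel

lemma MeasureTheory.MemLp.integrable_inner {α E : Type*} [MeasurableSpace α] {μ : Measure α}
    [NormedAddCommGroup E] [InnerProductSpace ℝ E] {f g : α → E} (hf : MemLp f 2 μ)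
    (hg : MemLp g 2 μ) : Integrable (fun a => inner ℝ (f a) (g a)) μ :=
  (hf.norm.integrable_mul hg.norm).mono' (hf.1.inner (𝕜 := ℝ) hg.1)
    (ae_of_all _ fun a => by simpa using norm_inner_le_norm (𝕜 := ℝ) (f a) (g a))

lemma real_inner_sub_sub_swap {E : Type*} [NormedAddCommGroup E] [InnerProductSpace ℝ E]
    (a b c d : E) : inner ℝ (b - a) (d - c) = inner ℝ (c - d) (a - b) := by
  rw [← neg_sub a b, ← neg_sub c d, inner_neg_neg, real_inner_comm]

section GluedPlan

variable {α α' β β' : Type*} [MeasurableSpace α] [MeasurableSpace α'] [MeasurableSpace β]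
  [MeasurableSpace β']

/-- The plan `∫ (δ_x ⊗ κ_x) ⊗ (δ_y ⊗ η_y) dρ(x, y)`. -/
noncomputable def gluedPlan (ρ : Measure (α × α')) (κ : Kernel α β) (η : Kernel α' β') :
    Measure ((α × β) × (α' × β')) :=
  ((Kernel.id ×ₖ κ) ∥ₖ (Kernel.id ×ₖ η)) ∘ₘ ρ

variable (ρ : Measure (α × α')) (κ : Kernel α β) (η : Kernel α' β')

lemma gluedPlan_eq_bind [IsSFiniteKernel κ] [IsSFiniteKernel η] :
    gluedPlan ρ κ η = ρ.bind fun q =>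
      ((Measure.dirac q.1).prod (κ q.1)).prod ((Measure.dirac q.2).prod (η q.2)) := by
  simp_rw [gluedPlan, ← Kernel.id_prod_apply]
  congr 1
  ext1 q
  rw [Kernel.parallelComp_apply]

lemma map_fst_gluedPlan [SFinite ρ] [IsSFiniteKernel κ] [IsMarkovKernel η] :
    (gluedPlan ρ κ η).map Prod.fst = ρ.map Prod.fst ⊗ₘ κ := by
  rw [gluedPlan, Measure.map_comp _ _ measurable_fst, Kernel.map_fst_parallelComp,
    Measure.comp_comap, Measure.compProd_eq_comp_prod]

lemma map_snd_gluedPlan [SFinite ρ] [IsMarkovKernel κ] [IsSFiniteKernel η] :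
    (gluedPlan ρ κ η).map Prod.snd = ρ.map Prod.snd ⊗ₘ η := by
  rw [gluedPlan, Measure.map_comp _ _ measurable_snd, Kernel.map_snd_parallelComp,
    Measure.comp_comap, Measure.compProd_eq_comp_prod]

lemma map_positions_gluedPlan [IsMarkovKernel κ] [IsMarkovKernel η] :
    (gluedPlan ρ κ η).map (fun p => (p.1.1, p.2.1)) = ρ := by
  rw [gluedPlan, Measure.map_comp _ _ (by fun_prop),
    show (fun p : (α × β) × (α' × β') => (p.1.1, p.2.1)) = Prod.map Prod.fst Prod.fst from rfl,
    Kernel.map_prodMap_parallelComp _ _ measurable_fst measurable_fst, ← Kernel.fst_eq,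
    ← Kernel.fst_eq, Kernel.fst_prod, Kernel.fst_prod, Kernel.id_parallelComp_id,
    Measure.id_comp]

end GluedPlan

section InnerProductSpace

variable {E : Type*} [NormedAddCommGroup E] [InnerProductSpace ℝ E] [SecondCountableTopology E]
  [MeasurableSpace E] [BorelSpace E]

lemma integral_inner_barycenter_le {lam : ℝ} {F : Set (Measure (E × E))}
    (hbr : TotallyDissipative lam (brSet F)) {Φ Ψ : Measure (E × E)} (hΦ : Φ ∈ F) (hΨ : Ψ ∈ F)
    (ρ : Measure (E × E)) (hρ₁ : ρ.map Prod.fst = Φ.map Prod.fst)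
    (hρ₂ : ρ.map Prod.snd = Ψ.map Prod.fst) (κΦ κΨ : Kernel E E) [IsMarkovKernel κΦ]
    [IsMarkovKernel κΨ] (hκΦ : Φ.map Prod.fst ⊗ₘ κΦ = Φ) (hκΨ : Ψ.map Prod.fst ⊗ₘ κΨ = Ψ) :
    ∫ q, inner ℝ (q.1 - q.2) (∫ v, v ∂κΦ q.1 - ∫ w, w ∂κΨ q.2) ∂ρ ≤
      lam * ∫ q, ‖q.1 - q.2‖ ^ 2 ∂ρ := by
  set T : E × E → (E × E) × (E × E) :=
    Prod.map (fun x => (x, ∫ v, v ∂κΦ x)) (fun y => (y, ∫ w, w ∂κΨ y))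
  have hT : Measurable T := by fun_prop
  have hT₁ : (ρ.map T).map Prod.fst = brOf Φ κΦ := by
    rw [Measure.map_map measurable_fst hT, brOf, ← hρ₁,
      Measure.map_map (by fun_prop) measurable_fst]
    rfl
  have hT₂ : (ρ.map T).map Prod.snd = brOf Ψ κΨ := by
    rw [Measure.map_map measurable_snd hT, brOf, ← hρ₂,
      Measure.map_map (by fun_prop) measurable_snd]
    rfl
  have h := hbr _ ⟨Φ, hΦ, κΦ, ‹_›, hκΦ, rfl⟩ _ ⟨Ψ, hΨ, κΨ, ‹_›, hκΨ, rfl⟩ _ hT₁ hT₂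
  rw [integral_map hT.aemeasurable (by fun_prop), integral_map hT.aemeasurable (by fun_prop)] at h
  simpa only [T, Prod.map_fst, Prod.map_snd, real_inner_sub_sub_swap, norm_sub_rev] using h

variable [CompleteSpace E]

lemma integral_inner_sub_sub_dirac_prod (x y : E) (μ ν : Measure E) [IsProbabilityMeasure μ]
    [IsProbabilityMeasure ν] (hμ : Integrable id μ) (hν : Integrable id ν) :
    ∫ p, inner ℝ (p.1.1 - p.2.1) (p.1.2 - p.2.2)
        ∂(((Measure.dirac x).prod μ).prod ((Measure.dirac y).prod ν)) =
      inner ℝ (x - y) (∫ v, v ∂μ - ∫ w, w ∂ν) := by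
  have h₁ : Integrable (fun p : E × E => p.1) (μ.prod ν) := hμ.comp_fst ν
  have h₂ : Integrable (fun p : E × E => p.2) (μ.prod ν) := hν.comp_snd μ
  have h₁₂ : Integrable (fun p : E × E => p.1 - p.2) (μ.prod ν) := h₁.sub h₂
  rw [Measure.dirac_prod, Measure.dirac_prod,
    Measure.map_prod_map _ _ measurable_prodMk_left measurable_prodMk_left,
    integral_map (by fun_prop) (by fun_prop)]
  simp only [Prod.map_fst, Prod.map_snd]
  rw [integral_inner h₁₂, integral_sub h₁ h₂, integral_fun_fst (fun v => v),
    integral_fun_snd (fun w => w)]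
  simp

lemma integral_inner_gluedPlan (ρ : Measure (E × E)) [IsProbabilityMeasure ρ] (κ η : Kernel E E)
    [IsMarkovKernel κ] [IsMarkovKernel η] (hκ : MemLp id 2 (ρ.map Prod.fst ⊗ₘ κ))
    (hη : MemLp id 2 (ρ.map Prod.snd ⊗ₘ η)) :
    ∫ p, inner ℝ (p.1.1 - p.2.1) (p.1.2 - p.2.2) ∂(gluedPlan ρ κ η) =
      ∫ q, inner ℝ (q.1 - q.2) (∫ v, v ∂κ q.1 - ∫ w, w ∂η q.2) ∂ρ := by
  have hκ_ae : ∀ᵐ q ∂ρ, Integrable id (κ q.1) := ae_of_ae_map measurable_fst.aemeasurable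
    (p := fun x => Integrable id (κ x)) ((Measure.integrable_compProd_iff hκ.snd.1).1
      (hκ.snd.integrable one_le_two)).1
  have hη_ae : ∀ᵐ q ∂ρ, Integrable id (η q.2) := ae_of_ae_map measurable_snd.aemeasurable
    (p := fun x => Integrable id (η x)) ((Measure.integrable_compProd_iff hη.snd.1).1
      (hη.snd.integrable one_le_two)).1
  rw [← map_fst_gluedPlan ρ κ η, memLp_map_measure_iff aestronglyMeasurable_id (by fun_prop)] at hκ
  rw [← map_snd_gluedPlan ρ κ η, memLp_map_measure_iff aestronglyMeasurable_id (by fun_prop)] at hη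
  have hint : Integrable (fun p => inner ℝ (p.1.1 - p.2.1) (p.1.2 - p.2.2)) (gluedPlan ρ κ η) :=
    (hκ.fst.sub hη.fst).integrable_inner (hκ.snd.sub hη.snd)
  rw [gluedPlan, Measure.integral_bind _ _ hint]
  refine integral_congr_ae ?_
  filter_upwards [hκ_ae, hη_ae] with q hκq hηq
  rw [Kernel.parallelComp_apply, Kernel.id_prod_apply, Kernel.id_prod_apply,
    integral_inner_sub_sub_dirac_prod _ _ _ _ hκq hηq]

lemma integral_inner_gluedPlan_le {lam : ℝ} {F : Set (Measure (E × E))} (hF : IsMPVF F)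
    (hbr : TotallyDissipative lam (brSet F)) {Φ Ψ : Measure (E × E)} (hΦ : Φ ∈ F) (hΨ : Ψ ∈ F)
    (ρ : Measure (E × E)) [IsProbabilityMeasure ρ] (hρ₁ : ρ.map Prod.fst = Φ.map Prod.fst)
    (hρ₂ : ρ.map Prod.snd = Ψ.map Prod.fst) (κΦ κΨ : Kernel E E) [IsMarkovKernel κΦ]
    [IsMarkovKernel κΨ] (hκΦ : Φ.map Prod.fst ⊗ₘ κΦ = Φ) (hκΨ : Ψ.map Prod.fst ⊗ₘ κΨ = Ψ) :
    ∫ p, inner ℝ (p.1.1 - p.2.1) (p.1.2 - p.2.2) ∂(gluedPlan ρ κΦ κΨ) ≤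
      lam * ∫ q, ‖q.1 - q.2‖ ^ 2 ∂ρ := by
  have hmemLp {Θ : Measure (E × E)} (hΘ : Θ ∈ F) : MemLp id 2 Θ :=
    (memLp_two_iff_integrable_sq_norm aestronglyMeasurable_id).2 (hF.2 Θ hΘ).2
  rw [integral_inner_gluedPlan ρ κΦ κΨ (by rw [hρ₁, hκΦ]; exact hmemLp hΦ)
    (by rw [hρ₂, hκΨ]; exact hmemLp hΨ)]
  exact integral_inner_barycenter_le hbr hΦ hΨ ρ hρ₁ hρ₂ κΦ κΨ hκΦ hκΨ

theorem uncondDissipative_of_totallyDissipative_brSet {lam : ℝ} {F : Set (Measure (E × E))}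
    (hF : IsMPVF F) (hbr : TotallyDissipative lam (brSet F)) : UncondDissipative lam F := by
  intro γ hγ Φ₀ hΦ₀ Φ₁ hΦ₁ h₀ h₁
  have := hγ.1
  have := (hF.2 Φ₀ hΦ₀).1
  have := (hF.2 Φ₁ hΦ₁).1
  refine ⟨gluedPlan γ Φ₀.condKernel Φ₁.condKernel, ?_, ?_, map_positions_gluedPlan _ _ _, ?_⟩
  · rw [map_fst_gluedPlan, ← h₀]
    exact Φ₀.disintegrate _
  · rw [map_snd_gluedPlan, ← h₁]
    exact Φ₁.disintegrate _
  · simpa only [real_inner_sub_sub_swap, norm_sub_rev] using integral_inner_gluedPlan_le hF hbr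
      hΦ₀ hΦ₁ γ h₀.symm h₁.symm _ _ (Φ₀.disintegrate _) (Φ₁.disintegrate _)

end InnerProductSpace

/-- If the barycentric projection of an MPVF `F` is totally
`λ`-dissipative, then for `Φ, Ψ ∈ F` and any coupling `γ` of their position marginals,
the glued plan `σ := ∫ (δ_x ⊗ Φ_x) ⊗ (δ_y ⊗ Ψ_y) dγ(x,y)` is a coupling of `Φ` and `Ψ`
whose position marginal is `γ` and which satisfies
`∫⟨x−y, v−w⟩ dσ ≤ λ ∫ |x−y|² dγ`; in particular `F` is unconditionally
`λ`-dissipative. -/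
theorem stmt0 (lam : ℝ) (F : Set (Measure (X × X)))
    (hF : IsMPVF F) (hbr : TotallyDissipative lam (brSet F))
    (Φ Ψ : Measure (X × X)) (hΦ : Φ ∈ F) (hΨ : Ψ ∈ F)
    (γ : Measure (X × X)) [IsProbabilityMeasure γ]
    (hγ1 : γ.map Prod.fst = Φ.map Prod.fst) (hγ2 : γ.map Prod.snd = Ψ.map Prod.fst)
    (κΦ κΨ : Kernel X X) [IsMarkovKernel κΦ] [IsMarkovKernel κΨ]
    (hκΦ : (Φ.map Prod.fst).compProd κΦ = Φ)
    (hκΨ : (Ψ.map Prod.fst).compProd κΨ = Ψ)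
    (σ : Measure ((X × X) × (X × X)))
    (hσ : σ = γ.bind (fun q =>
      ((Measure.dirac q.1).prod (κΦ q.1)).prod ((Measure.dirac q.2).prod (κΨ q.2)))) :
    σ.map Prod.fst = Φ ∧ σ.map Prod.snd = Ψ ∧
    σ.map (fun p => (p.1.1, p.2.1)) = γ ∧
    (∫ p, (inner ℝ (p.1.1 - p.2.1) (p.1.2 - p.2.2) : ℝ) ∂σ) ≤
      lam * (∫ q, ‖q.1 - q.2‖ ^ 2 ∂γ) ∧
    UncondDissipative lam F := by
  subst hσ
  rw [← gluedPlan_eq_bind]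
  exact ⟨by rw [map_fst_gluedPlan, hγ1, hκΦ], by rw [map_snd_gluedPlan, hγ2, hκΨ],
    map_positions_gluedPlan _ _ _,
    integral_inner_gluedPlan_le hF hbr hΦ hΨ γ hγ1 hγ2 κΦ κΨ hκΦ hκΨ,
    uncondDissipative_of_totallyDissipative_brSet hF hbr⟩
end

section
/- Let F ⊆ P₂(TX) be an MPVF, μ̄ ∈ D(F), τ, T, L > 0 and N := ⌈T/τ⌉. Let (Mⁿ_τ, Φⁿ_τ)_{0≤n≤N} be an L-stable solution of the Explicit Euler scheme starting from μ̄ and let η_τ := G_♯α_τ, where α_τ is the multi-step plan associated with (Φⁿ_τ)ₙ. Define the 2-action A₂: C([0,T];X) → [0,+∞] by A₂(γ) := ∫₀ᵀ |γ'(t)|² dt if γ is absolutely continuous with derivative in L²(0,T;X), and A₂(γ) := +∞ otherwise. Then ∫ A₂ dη_τ ≤ Σ_{k=0}^{N−1} τ |Φᵏ_τ|₂² ≤ L²(T + τ). -/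
open MeasureTheory ProbabilityTheory
open scoped ENNReal

variable {X : Type*} [NormedAddCommGroup X] [InnerProductSpace ℝ X]
  [CompleteSpace X] [SecondCountableTopology X] [MeasurableSpace X] [BorelSpace X]

/-- An `L`-stable solution of the Explicit Euler scheme. -/
def IsEulerSol (F : Set (Measure (X × X))) (τ L : ℝ) (N : ℕ) (μ0 : Measure X)
    (M : ℕ → Measure X) (Φ : ℕ → Measure (X × X)) : Prop :=
  M 0 = μ0 ∧
  (∀ n < N, Φ n ∈ F ∧ (Φ n).map Prod.fst = M n ∧ (∫ z, ‖z.2‖ ^ 2 ∂(Φ n)) ≤ L ^ 2) ∧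
  (∀ n < N, M (n + 1) = (Φ n).map (fun z : X × X => z.1 + τ • z.2))

/-- The multi-step plans. -/
noncomputable def mstep (T0 : Measure (X × X)) (κ : ℕ → Kernel X X) :
    (n : ℕ) → Measure (Fin (n + 2) → X)
  | 0 => T0.map (fun p => ![p.1, p.2])
  | n + 1 => (mstep T0 κ n).bind
      (fun xs => ((κ (n + 1)) (xs (Fin.last (n + 1)))).map (Fin.snoc xs))

/-- The `2`-action functional on `C([0,T];X)`: `A₂(γ) = ∫₀ᵀ |γ'(t)|² dt` if `γ` is
absolutely continuous with (interval-)integrable derivative, `+∞` otherwise. -/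
noncomputable def action2 (T : ℝ) (hT : 0 ≤ T) (γ : C(Set.Icc (0:ℝ) T, X)) : ℝ≥0∞ :=
  ⨅ (g : ℝ → X) (_ : IntervalIntegrable g MeasureTheory.volume 0 T)
    (_ : ∀ t : Set.Icc (0:ℝ) T,
      γ t = γ ⟨0, Set.left_mem_Icc.mpr hT⟩ + ∫ s in (0:ℝ)..(t : ℝ), g s),
    ∫⁻ s in Set.Ioc (0:ℝ) T, (‖g s‖₊ : ℝ≥0∞) ^ 2

/-!
The multi-step plan glues the single-step plans along their common marginals, so its projection
onto two consecutive nodes `(xₙ, xₙ₊₁)` is the single-step plan `(x, x + τ v)_♯ Φⁿ`. A curve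
charged by `η_τ` is the piecewise-affine interpolation of its nodes: its velocity is the constant
`(xₙ₊₁ - xₙ) / τ` on `(nτ, (n+1)τ]`, so its action is at most `Σₙ τ ‖(xₙ₊₁ - xₙ) / τ‖²`, and
integrating against the multi-step plan turns this into `Σₙ τ |Φⁿ|₂²`. The last bound uses
`|Φⁿ|₂ ≤ L` and `Nτ < T + τ`.
-/

section MultiStepPlan

variable {α : Type*} [MeasurableSpace α]

lemma measurable_finSnoc {n : ℕ} :
    Measurable (Function.uncurry (Fin.snoc (α := fun _ : Fin (n + 1) => α))) := by
  refine measurable_pi_iff.2 fun i => ?_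
  induction i using Fin.lastCases with
  | last => simpa [Function.uncurry_def] using measurable_snd
  | cast j =>
    simp only [Function.uncurry_def, Fin.snoc_castSucc]
    exact (measurable_pi_apply j).comp measurable_fst

lemma measurable_finInit {n : ℕ} : Measurable (Fin.init : (Fin (n + 1) → α) → Fin n → α) :=
  measurable_pi_lambda _ fun i => measurable_pi_apply i.castSucc

lemma measurable_map_kernel {β γ : Type*} [MeasurableSpace β] [MeasurableSpace γ]
    (κ : Kernel β α) [IsSFiniteKernel κ] {g : β → α → γ} (hg : Measurable (Function.uncurry g)) :
    Measurable fun b => (κ b).map (g b) := by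
  refine Measure.measurable_of_measurable_coe _ fun s hs => ?_
  convert Kernel.measurable_kernel_prodMk_left (κ := κ) (hg hs) using 1
  funext b
  exact Measure.map_apply (hg.comp measurable_prodMk_left) hs

variable (T0 : Measure (α × α)) (κ : ℕ → Kernel α α)

lemma lintegral_mstep_succ (n : ℕ) [IsSFiniteKernel (κ (n + 1))]
    {f : (Fin (n + 3) → α) → ℝ≥0∞} (hf : Measurable f) :
    ∫⁻ xs, f xs ∂mstep T0 κ (n + 1)
      = ∫⁻ xs, ∫⁻ y, f (Fin.snoc xs y) ∂κ (n + 1) (xs (Fin.last (n + 1))) ∂mstep T0 κ n := by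
  have hstep : Measurable fun xs : Fin (n + 2) → α =>
      (κ (n + 1) (xs (Fin.last (n + 1)))).map (Fin.snoc (α := fun _ => α) xs) :=
    measurable_map_kernel ((κ (n + 1)).comap (fun xs : Fin (n + 2) → α => xs (Fin.last (n + 1)))
      (measurable_pi_apply _)) measurable_finSnoc
  rw [mstep]
  exact (Measure.lintegral_bind hstep.aemeasurable hf.aemeasurable).trans
    (lintegral_congr fun xs => lintegral_map hf (measurable_finSnoc.comp measurable_prodMk_left))

lemma mstep_succ_map_init (n : ℕ) [IsMarkovKernel (κ (n + 1))] :
    (mstep T0 κ (n + 1)).map Fin.init = mstep T0 κ n := by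
  refine Measure.ext_of_lintegral _ fun f hf => ?_
  rw [lintegral_map hf measurable_finInit]
  refine (lintegral_mstep_succ T0 κ n (hf.comp measurable_finInit)).trans ?_
  simp [Fin.init_snoc]

lemma mstep_succ_map_lastPair (n : ℕ) [IsSFiniteKernel (κ (n + 1))] {μ : Measure α} [SFinite μ]
    (hμ : (mstep T0 κ n).map (fun xs => xs (Fin.last (n + 1))) = μ) :
    (mstep T0 κ (n + 1)).map
        (fun xs => (xs (Fin.last (n + 1)).castSucc, xs (Fin.last (n + 1)).succ))
      = μ ⊗ₘ κ (n + 1) := by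
  have hpair : Measurable fun xs : Fin (n + 3) → α =>
      (xs (Fin.last (n + 1)).castSucc, xs (Fin.last (n + 1)).succ) := by fun_prop
  refine Measure.ext_of_lintegral _ fun f hf => ?_
  rw [lintegral_map hf hpair, Measure.lintegral_compProd hf, ← hμ,
    lintegral_map (hf.lintegral_kernel_prod_right' (κ := κ (n + 1))) (measurable_pi_apply _)]
  refine (lintegral_mstep_succ T0 κ n (hf.comp hpair)).trans ?_
  simp [Fin.snoc_castSucc, Fin.succ_last]

theorem mstep_map_consecutivePair [∀ n, IsMarkovKernel (κ n)] (Tn : ℕ → Measure (α × α))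
    {n : ℕ} (hsf : ∀ i < n, SFinite (Tn i))
    (hTn : ∀ i < n, ((Tn i).map Prod.snd) ⊗ₘ κ (i + 1) = Tn (i + 1)) (i : Fin (n + 1)) :
    (mstep (Tn 0) κ n).map (fun xs => (xs i.castSucc, xs i.succ)) = Tn i := by
  induction n with
  | zero =>
    obtain rfl := Fin.fin_one_eq_zero i
    have hvec : Measurable fun p : α × α => ![p.1, p.2] :=
      measurable_pi_iff.2 fun i => by fin_cases i <;> simp <;> fun_prop
    rw [mstep, Measure.map_map (by fun_prop) hvec]
    exact Measure.map_id
  | succ n ih =>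
    specialize ih (fun i hi => hsf i (by omega)) (fun i hi => hTn i (by omega))
    induction i using Fin.lastCases with
    | last =>
      have hlast : (mstep (Tn 0) κ n).map (fun xs => xs (Fin.last (n + 1)))
          = (Tn n).map Prod.snd := by
        rw [← Fin.val_last n, ← ih, Measure.map_map measurable_snd (by fun_prop)]
        rfl
      have := hsf n (by omega)
      exact (mstep_succ_map_lastPair _ κ n hlast).trans (hTn n (by omega))
    | cast j =>
      rw [Fin.val_castSucc, ← ih j, ← mstep_succ_map_init _ κ n,
        Measure.map_map (by fun_prop) measurable_finInit]
      rfl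

end MultiStepPlan

lemma apply_sum_indicator_of_pairwiseDisjoint {ι β M N : Type*} [AddCommMonoid M]
    [AddCommMonoid N] {s : Finset ι} {S : ι → Set β} (hS : (s : Set ι).PairwiseDisjoint S)
    (c : ι → M) {φ : M → N} (hφ : φ 0 = 0) (x : β) :
    φ (∑ n ∈ s, (S n).indicator (fun _ => c n) x)
      = ∑ n ∈ s, (S n).indicator (fun _ => φ (c n)) x := by
  by_cases hx : ∃ m ∈ s, x ∈ S m
  · obtain ⟨m, hm, hxm⟩ := hx
    have hxn : ∀ n ∈ s, n ≠ m → x ∉ S n := fun n hn hnm hxn =>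
      Set.disjoint_left.1 (hS hn hm hnm) hxn hxm
    rw [Finset.sum_eq_single_of_mem m hm fun n hn hnm => Set.indicator_of_notMem (hxn n hn hnm) _,
      Finset.sum_eq_single_of_mem m hm fun n hn hnm => Set.indicator_of_notMem (hxn n hn hnm) _,
      Set.indicator_of_mem hxm, Set.indicator_of_mem hxm]
  · push Not at hx
    rw [Finset.sum_eq_zero fun n hn => Set.indicator_of_notMem (hx n hn) _,
      Finset.sum_eq_zero fun n hn => Set.indicator_of_notMem (hx n hn) _, hφ]

lemma exists_le_mem_Icc_nat_mul {τ t : ℝ} {K : ℕ} (hτ : 0 < τ) (ht : 0 ≤ t)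
    (htK : t ≤ (K + 1) * τ) : ∃ m ≤ K, t ∈ Set.Icc (m * τ) ((m + 1) * τ) := by
  refine ⟨min ⌊t / τ⌋₊ K, min_le_right _ _, ?_, ?_⟩
  · calc ((min ⌊t / τ⌋₊ K : ℕ) : ℝ) * τ ≤ ⌊t / τ⌋₊ * τ := by
          gcongr; exact_mod_cast min_le_left _ _
      _ ≤ t / τ * τ := by gcongr; exact Nat.floor_le (by positivity)
      _ = t := div_mul_cancel₀ _ hτ.ne'
  · rcases le_total ⌊t / τ⌋₊ K with h | h
    · rw [min_eq_left h]
      have := Nat.lt_floor_add_one (t / τ)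
      rw [div_lt_iff₀ hτ] at this
      exact this.le
    · rwa [min_eq_right h]

lemma nat_mul_lt_and_le_add_one_mul_of_add_one_eq_ceil {τ T : ℝ} {K : ℕ} (hτ : 0 < τ)
    (hK : K + 1 = ⌈T / τ⌉₊) : K * τ < T ∧ T ≤ (K + 1) * τ := by
  constructor
  · rw [← lt_div_iff₀ hτ, ← Nat.lt_ceil, ← hK]
    omega
  · rw [← div_le_iff₀ hτ]
    exact_mod_cast hK ▸ Nat.le_ceil (T / τ)

section PiecewiseAffine

variable {E : Type*} [NormedAddCommGroup E] [NormedSpace ℝ E]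

lemma intervalIntegral_indicator_Ioc_const [CompleteSpace E] {a b t : ℝ} (ha : 0 ≤ a)
    (hab : a ≤ b) (ht : 0 ≤ t) (c : E) :
    ∫ s in (0 : ℝ)..t, (Set.Ioc a b).indicator (fun _ => c) s = (min t b - min t a) • c := by
  rw [intervalIntegral.integral_of_le ht, setIntegral_indicator measurableSet_Ioc,
    Set.Ioc_inter_Ioc, setIntegral_const, Real.volume_real_Ioc, max_eq_right ha]
  congr 1
  rcases le_total t a with hta | hat
  · simp [hta, hta.trans hab]
  · rw [min_eq_right hat]
    exact max_eq_left (sub_nonneg.2 (le_min hat hab))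

noncomputable def interpolationVelocity (τ : ℝ) (K : ℕ) (x : ℕ → E) (s : ℝ) : E :=
  ∑ n ∈ Finset.range (K + 1),
    (Set.Ioc (n * τ) ((n + 1) * τ)).indicator (fun _ => τ⁻¹ • (x (n + 1) - x n)) s

variable {τ : ℝ} (K : ℕ) (x : ℕ → E)

lemma integrable_interpolationVelocity : Integrable (interpolationVelocity τ K x) :=
  integrable_finsetSum _ fun _ _ =>
    (integrable_indicator_iff measurableSet_Ioc).2 (integrableOn_const measure_Ioc_lt_top.ne)

lemma intervalIntegral_interpolationVelocity [CompleteSpace E] (hτ : 0 < τ) {t : ℝ}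
    (ht : 0 ≤ t) :
    ∫ s in (0 : ℝ)..t, interpolationVelocity τ K x s
      = ∑ n ∈ Finset.range (K + 1),
          (min t ((n + 1) * τ) - min t (n * τ)) • τ⁻¹ • (x (n + 1) - x n) := by
  unfold interpolationVelocity
  rw [intervalIntegral.integral_finsetSum fun n _ =>
    ((integrable_indicator_iff measurableSet_Ioc).2
      (integrableOn_const measure_Ioc_lt_top.ne)).intervalIntegrable]
  exact Finset.sum_congr rfl fun n _ =>
    intervalIntegral_indicator_Ioc_const (by positivity) (by gcongr; linarith) ht _

lemma intervalIntegral_interpolationVelocity_of_mem [CompleteSpace E] (hτ : 0 < τ) {m : ℕ}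
    (hm : m ≤ K) {t : ℝ} (ht : t ∈ Set.Icc (m * τ) ((m + 1) * τ)) :
    ∫ s in (0 : ℝ)..t, interpolationVelocity τ K x s
      = x m - x 0 + (τ⁻¹ * (t - m * τ)) • (x (m + 1) - x m) := by
  obtain ⟨hmt, htm⟩ := ht
  have hbefore : ∀ n ∈ Finset.range m,
      (min t ((n + 1) * τ) - min t (n * τ)) • τ⁻¹ • (x (n + 1) - x n) = x (n + 1) - x n := by
    intro n hn
    have hnm : (n : ℝ) + 1 ≤ m := by exact_mod_cast Finset.mem_range.1 hn
    have hnt : (n + 1) * τ ≤ t := by nlinarith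
    rw [min_eq_right hnt, min_eq_right (by nlinarith), smul_smul, ← sub_mul, add_sub_cancel_left,
      one_mul, mul_inv_cancel₀ hτ.ne', one_smul]
  have hafter : ∀ n ∈ Finset.Ico (m + 1) (K + 1),
      (min t ((n + 1) * τ) - min t (n * τ)) • τ⁻¹ • (x (n + 1) - x n) = 0 := by
    intro n hn
    have hmn : (m : ℝ) + 1 ≤ n := by exact_mod_cast (Finset.mem_Ico.1 hn).1
    have htn : t ≤ n * τ := by nlinarith
    rw [min_eq_left htn, min_eq_left (by nlinarith), sub_self, zero_smul]
  rw [intervalIntegral_interpolationVelocity K x hτ ((by positivity : (0 : ℝ) ≤ m * τ).trans hmt),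
    ← Finset.sum_range_add_sum_Ico _ (by omega : m + 1 ≤ K + 1), Finset.sum_range_succ,
    Finset.sum_congr rfl hbefore, Finset.sum_range_sub, Finset.sum_congr rfl hafter,
    Finset.sum_const_zero, add_zero, min_eq_left htm, min_eq_right hmt, smul_smul, mul_comm]

lemma lintegral_interpolationVelocity (hτ : 0 ≤ τ) :
    ∫⁻ s, (‖interpolationVelocity τ K x s‖₊ : ℝ≥0∞) ^ 2
      = ∑ n ∈ Finset.range (K + 1),
          ENNReal.ofReal τ * (‖τ⁻¹ • (x (n + 1) - x n)‖₊ : ℝ≥0∞) ^ 2 := by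
  have hdisj : ((Finset.range (K + 1) : Finset ℕ) : Set ℕ).PairwiseDisjoint
      fun n : ℕ => Set.Ioc (n * τ) ((n + 1) * τ) := by
    have hmono : Monotone fun n : ℕ => (n : ℝ) * τ :=
      fun m n hmn => mul_le_mul_of_nonneg_right (Nat.cast_le.2 hmn) hτ
    have := hmono.pairwise_disjoint_on_Ioc_succ
    exact fun m _ n _ hmn => by simpa using this hmn
  simp_rw [interpolationVelocity, apply_sum_indicator_of_pairwiseDisjoint hdisj _
    (φ := fun v : E => (‖v‖₊ : ℝ≥0∞) ^ 2) (by simp)]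
  rw [lintegral_finsetSum _ fun n _ => measurable_const.indicator measurableSet_Ioc]
  refine Finset.sum_congr rfl fun n _ => ?_
  rw [lintegral_indicator measurableSet_Ioc, setLIntegral_const, Real.volume_Ioc, mul_comm]
  ring_nf

end PiecewiseAffine

lemma action2_le_of_eq_interpolation {E : Type*} [NormedAddCommGroup E] [InnerProductSpace ℝ E]
    [CompleteSpace E] {τ T : ℝ} (hτ : 0 < τ) (hT : 0 ≤ T) {K : ℕ} (hTK : T ≤ (K + 1) * τ)
    (x : ℕ → E) (γ : C(Set.Icc (0 : ℝ) T, E))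
    (hγ : ∀ n ≤ K, ∀ t ∈ Set.Icc (n * τ) ((n + 1) * τ), ∀ ht : t ∈ Set.Icc (0 : ℝ) T,
      γ ⟨t, ht⟩ = (τ⁻¹ * ((n + 1) * τ - t)) • x n + (τ⁻¹ * (t - n * τ)) • x (n + 1)) :
    action2 T hT γ ≤ ∑ n ∈ Finset.range (K + 1),
      ENNReal.ofReal τ * (‖τ⁻¹ • (x (n + 1) - x n)‖₊ : ℝ≥0∞) ^ 2 := by
  have hγ0 : γ ⟨0, Set.left_mem_Icc.2 hT⟩ = x 0 := by
    rw [hγ 0 K.zero_le 0 ⟨by simp, by simp [hτ.le]⟩]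
    simp [hτ.ne']
  have hpath : ∀ t : Set.Icc (0 : ℝ) T, γ t = γ ⟨0, Set.left_mem_Icc.2 hT⟩
      + ∫ s in (0 : ℝ)..t, interpolationVelocity τ K x s := by
    rintro ⟨t, ht⟩
    obtain ⟨m, hm, htm⟩ := exists_le_mem_Icc_nat_mul hτ ht.1 (ht.2.trans hTK)
    rw [hγ m hm t htm ht, hγ0, intervalIntegral_interpolationVelocity_of_mem K x hτ hm htm]
    match_scalars <;> field_simp <;> ring
  calc action2 T hT γ
      ≤ ∫⁻ s in Set.Ioc 0 T, (‖interpolationVelocity τ K x s‖₊ : ℝ≥0∞) ^ 2 :=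
        iInf_le_of_le _ <| iInf_le_of_le
          (integrable_interpolationVelocity K x).intervalIntegrable (iInf_le _ hpath)
    _ ≤ ∫⁻ s, (‖interpolationVelocity τ K x s‖₊ : ℝ≥0∞) ^ 2 := setLIntegral_le_lintegral _ _
    _ = _ := lintegral_interpolationVelocity K x hτ.le

lemma action2_le_of_eq_interpolation_fin {E : Type*} [NormedAddCommGroup E]
    [InnerProductSpace ℝ E] [CompleteSpace E] {τ T : ℝ} (hτ : 0 < τ) (hT : 0 ≤ T) {K : ℕ}
    (hTK : T ≤ (K + 1) * τ) (xs : Fin (K + 2) → E) (γ : C(Set.Icc (0 : ℝ) T, E))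
    (hγ : ∀ (n : ℕ) (hn : n ≤ K), ∀ t ∈ Set.Icc (n * τ) ((n + 1) * τ),
      ∀ ht : t ∈ Set.Icc (0 : ℝ) T, γ ⟨t, ht⟩ = (τ⁻¹ * ((n + 1) * τ - t)) • xs ⟨n, by omega⟩
        + (τ⁻¹ * (t - n * τ)) • xs ⟨n + 1, by omega⟩) :
    action2 T hT γ ≤ ∑ i : Fin (K + 1),
      ENNReal.ofReal τ * (‖τ⁻¹ • (xs i.succ - xs i.castSucc)‖₊ : ℝ≥0∞) ^ 2 := by
  have := action2_le_of_eq_interpolation hτ hT hTK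
    (fun n => if h : n < K + 2 then xs ⟨n, h⟩ else 0) γ fun n hn t htn ht => by
      simpa [show n < K + 2 by omega, show n + 1 < K + 2 by omega] using hγ n hn t htn ht
  rw [← Fin.sum_univ_eq_sum_range] at this
  refine this.trans_eq (Finset.sum_congr rfl fun i _ => ?_)
  have := i.2
  rw [dif_pos (by omega : (i : ℕ) + 1 < K + 2), dif_pos (by omega : (i : ℕ) < K + 2)]
  rfl

lemma MemP2.lintegral_nnnorm_snd_sq {E F : Type*} [NormedAddCommGroup E] [NormedAddCommGroup F]
    [MeasurableSpace E] [MeasurableSpace F] [OpensMeasurableSpace F] {μ : Measure (E × F)}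
    (hμ : MemP2 μ) :
    ∫⁻ z, (‖z.2‖₊ : ℝ≥0∞) ^ 2 ∂μ = ENNReal.ofReal (∫ z, ‖z.2‖ ^ 2 ∂μ) := by
  have hint : Integrable (fun z : E × F => ‖z.2‖ ^ 2) μ :=
    hμ.2.mono (measurable_snd.norm.pow_const 2).aestronglyMeasurable <| ae_of_all _ fun z => by
      simp only [norm_pow, norm_norm]
      gcongr
      exact norm_snd_le z
  rw [ofReal_integral_eq_lintegral_ofReal hint (ae_of_all _ fun z => by positivity)]
  refine lintegral_congr fun z => ?_
  rw [ENNReal.ofReal_pow (norm_nonneg _), ofReal_norm]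
  rfl

section EulerScheme

variable {E : Type*} [NormedAddCommGroup E] [MeasurableSpace E] [BorelSpace E]
  [SecondCountableTopology E]

lemma lintegral_nnnorm_velocity_sq_of_map_eq [NormedSpace ℝ E] {τ : ℝ} (hτ : τ ≠ 0) {n : ℕ}
    {P : Measure (Fin (n + 2) → E)} {i : Fin (n + 1)} {Φ : Measure (E × E)}
    (hP : P.map (fun xs => (xs i.castSucc, xs i.succ)) = Φ.map fun z => (z.1, z.1 + τ • z.2)) :
    ∫⁻ xs, (‖τ⁻¹ • (xs i.succ - xs i.castSucc)‖₊ : ℝ≥0∞) ^ 2 ∂P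
      = ∫⁻ z, (‖z.2‖₊ : ℝ≥0∞) ^ 2 ∂Φ := by
  have hq : Measurable fun p : E × E => (‖τ⁻¹ • (p.2 - p.1)‖₊ : ℝ≥0∞) ^ 2 := by fun_prop
  calc _ = ∫⁻ p, (‖τ⁻¹ • (p.2 - p.1)‖₊ : ℝ≥0∞) ^ 2
          ∂P.map (fun xs => (xs i.castSucc, xs i.succ)) := (lintegral_map hq (by fun_prop)).symm
    _ = ∫⁻ z, (‖τ⁻¹ • ((z.1 + τ • z.2) - z.1)‖₊ : ℝ≥0∞) ^ 2 ∂Φ := by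
        rw [hP, lintegral_map hq (by fun_prop)]
    _ = _ := by simp [smul_smul, hτ]

lemma IsEulerSol.map_mstep_consecutivePair [InnerProductSpace ℝ E] {F : Set (Measure (E × E))}
    (hF : IsMPVF F) {τ L : ℝ} {K : ℕ} {μ0 : Measure E} {M : ℕ → Measure E}
    {Φ : ℕ → Measure (E × E)} (hEuler : IsEulerSol F τ L (K + 1) μ0 M Φ)
    {κ : ℕ → Kernel E E} [∀ n, IsMarkovKernel (κ n)]
    (hdis : ∀ n ≤ K, (M n) ⊗ₘ (κ n) = (Φ n).map fun z => (z.1, z.1 + τ • z.2))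
    (i : Fin (K + 1)) :
    (mstep ((Φ 0).map fun z => (z.1, z.1 + τ • z.2)) κ K).map
        (fun xs => (xs i.castSucc, xs i.succ))
      = (Φ i).map fun z => (z.1, z.1 + τ • z.2) := by
  refine mstep_map_consecutivePair κ (fun n => (Φ n).map _) (fun n hn => ?_) (fun n hn => ?_) i
  · have := (hF.2 _ (hEuler.2.1 n (by omega)).1).1
    infer_instance
  · rw [Measure.map_map measurable_snd (by fun_prop), ← hdis (n + 1) (by omega),
      hEuler.2.2 n (by omega)]
    rfl

end EulerScheme

/-- For an `L`-stable Explicit Euler solution with step `τ`,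
`N = K + 1 = ⌈T/τ⌉`, and the lifted measure `η_τ = G_♯α_τ` on curves, the integral
of the `2`-action satisfies
`∫ A₂ dη_τ ≤ Σ_{k=0}^{N−1} τ |Φᵏ|₂² ≤ L²(T+τ)`. -/
theorem stmt7 (F : Set (Measure (X × X))) (hF : IsMPVF F)
    (τ T L : ℝ) (hτ : 0 < τ) (hT : 0 < T)
    (K : ℕ) (hK : K + 1 = ⌈T / τ⌉₊)
    (μ0 : Measure X) (M : ℕ → Measure X) (Φ : ℕ → Measure (X × X))
    (hEuler : IsEulerSol F τ L (K + 1) μ0 M Φ)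
    (κ : ℕ → Kernel X X) (hκM : ∀ n, IsMarkovKernel (κ n))
    (hdis : ∀ n ≤ K, (M n).compProd (κ n)
        = (Φ n).map (fun z : X × X => (z.1, z.1 + τ • z.2)))
    [MeasurableSpace C(Set.Icc (0:ℝ) T, X)]
    (G : (Fin (K + 2) → X) → C(Set.Icc (0:ℝ) T, X))
    (hG : ∀ (xs : Fin (K + 2) → X) (n : ℕ) (hn : n ≤ K) (t : ℝ),
      t ∈ Set.Icc ((n : ℝ) * τ) (((n : ℝ) + 1) * τ) → ∀ htT : t ∈ Set.Icc (0:ℝ) T,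
      G xs ⟨t, htT⟩ = (τ⁻¹ * (((n : ℝ) + 1) * τ - t)) • xs ⟨n, by omega⟩
        + (τ⁻¹ * (t - (n : ℝ) * τ)) • xs ⟨n + 1, by omega⟩)
    (η : Measure C(Set.Icc (0:ℝ) T, X))
    (hη : η = (mstep ((Φ 0).map (fun z : X × X => (z.1, z.1 + τ • z.2))) κ K).map G) :
    (∫⁻ γ, action2 T hT.le γ ∂η)
      ≤ ENNReal.ofReal (∑ k ∈ Finset.range (K + 1), τ * ∫ z, ‖z.2‖ ^ 2 ∂(Φ k)) ∧
    ENNReal.ofReal (∑ k ∈ Finset.range (K + 1), τ * ∫ z, ‖z.2‖ ^ 2 ∂(Φ k))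
      ≤ ENNReal.ofReal (L ^ 2 * (T + τ)) := by
  have := hκM
  obtain ⟨hKT, hTK⟩ := nat_mul_lt_and_le_add_one_mul_of_add_one_eq_ceil hτ hK
  have hterm (i : Fin (K + 1)) :
      ∫⁻ xs, (‖τ⁻¹ • (xs i.succ - xs i.castSucc)‖₊ : ℝ≥0∞) ^ 2
          ∂mstep ((Φ 0).map fun z => (z.1, z.1 + τ • z.2)) κ K
        = ENNReal.ofReal (∫ z, ‖z.2‖ ^ 2 ∂Φ i) := by
    rw [lintegral_nnnorm_velocity_sq_of_map_eq hτ.ne' (hEuler.map_mstep_consecutivePair hF hdis i),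
      (hF.2 _ (hEuler.2.1 i i.2).1).lintegral_nnnorm_snd_sq]
  refine ⟨?_, ENNReal.ofReal_le_ofReal ?_⟩
  · calc ∫⁻ γ, action2 T hT.le γ ∂η
        ≤ ∫⁻ xs, action2 T hT.le (G xs) ∂mstep ((Φ 0).map fun z => (z.1, z.1 + τ • z.2)) κ K :=
          hη ▸ lintegral_map_le _ _
      _ ≤ ∫⁻ xs, ∑ i : Fin (K + 1),
            ENNReal.ofReal τ * (‖τ⁻¹ • (xs i.succ - xs i.castSucc)‖₊ : ℝ≥0∞) ^ 2
            ∂mstep ((Φ 0).map fun z => (z.1, z.1 + τ • z.2)) κ K :=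
          lintegral_mono fun xs => action2_le_of_eq_interpolation_fin hτ hT.le hTK xs (G xs) (hG xs)
      _ = ∑ i : Fin (K + 1), ENNReal.ofReal (τ * ∫ z, ‖z.2‖ ^ 2 ∂Φ i) := by
          rw [lintegral_finsetSum _ fun i _ => by fun_prop]
          refine Finset.sum_congr rfl fun i _ => ?_
          rw [lintegral_const_mul _ (by fun_prop), hterm i, ENNReal.ofReal_mul hτ.le]
      _ = _ := by
          rw [Fin.sum_univ_eq_sum_range (fun k => ENNReal.ofReal (τ * ∫ z, ‖z.2‖ ^ 2 ∂Φ k)),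
            ENNReal.ofReal_sum_of_nonneg fun k _ =>
              mul_nonneg hτ.le (integral_nonneg fun _ => by positivity)]
  · calc ∑ k ∈ Finset.range (K + 1), τ * ∫ z, ‖z.2‖ ^ 2 ∂Φ k
        ≤ ∑ k ∈ Finset.range (K + 1), τ * L ^ 2 :=
          Finset.sum_le_sum fun k hk =>
            mul_le_mul_of_nonneg_left (hEuler.2.1 k (Finset.mem_range.1 hk)).2.2 hτ.le
      _ = (K + 1) * τ * L ^ 2 := by simp [mul_assoc]
      _ ≤ L ^ 2 * (T + τ) := by nlinarith [sq_nonneg L]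
end

section
/- Let μ: [0,+∞) → P₂(X) be such that the cardinality of supp(μ_t) is finite for every t ≥ 0 and is non-increasing as a function of t. Then there exists at most one η ∈ P(C([0,+∞);X)) such that (e_t)_♯η = μ_t for every t ≥ 0. -/
open MeasureTheory ProbabilityTheory
open scoped ENNReal

variable {X : Type*} [NormedAddCommGroup X] [InnerProductSpace ℝ X]
  [CompleteSpace X] [SecondCountableTopology X] [MeasurableSpace X] [BorelSpace X]

/-- The topological support of a measure. -/
def msupport {α : Type*} [TopologicalSpace α] [MeasurableSpace α] (μ : Measure α) :
    Set α :=
  {x | ∀ U : Set α, IsOpen U → x ∈ U → 0 < μ U}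

/-!
Since `η₁ + η₂` has the same marginal supports as `μ`, it suffices to show that for every such `η`
the whole curve is `η`-a.e. a function `g` of `γ 0`: then `η₁` and `η₂` are both determined by
`μ 0` and `g`.

The position at any time `t₀` determines the position at all slightly later times. The support `P`
of `(e_{t₀})_♯η` is finite, so its points are atoms, at mutual distance `≥ 3ε`. Curves through an
atom stay near it for a while, so shortly after `t₀` every ball `B(p, ε)`, `p ∈ P`, charges
`(e_t)_♯η`; as the support cannot grow, each ball then holds exactly one support point and there
are no others. A continuous curve lying in `⋃ B(p, ε)` at a dense set of times cannot jump from one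
ball to another, so its position at `t` is the support point in the ball of its position at `t₀`.
Being determined is transitive and closed in `t`, so real induction carries it from `0` to all
times.
-/

open Filter Topology Set Metric

theorem msupport_eq_support {α : Type*} [TopologicalSpace α] [MeasurableSpace α]
    (μ : Measure α) : msupport μ = μ.support := by
  ext x
  simp only [msupport, Measure.support_eq_forall_isOpen, mem_ofPred_eq]
  exact forall_congr' fun _ => imp.swap

theorem MeasureTheory.Measure.measure_singleton_ne_zero_of_mem_support {α : Type*}
    [TopologicalSpace α] [T1Space α] [HereditarilyLindelofSpace α] [MeasurableSpace α]
    {μ : Measure α} (hfin : μ.support.Finite) {x : α} (hx : x ∈ μ.support) : μ {x} ≠ 0 := by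
  have hU : IsOpen (μ.support \ {x})ᶜ := hfin.sdiff.isClosed.isOpen_compl
  have hpos := (Measure.mem_support_iff_forall x).1 hx _ (hU.mem_nhds fun h => h.2 rfl)
  rw [compl_sdiff] at hpos
  intro h0
  exact hpos.ne' (measure_union_null h0 Measure.measure_compl_support)

theorem Set.Finite.exists_pos_forall_le_dist {E : Type*} [MetricSpace E] {P : Set E}
    (hP : P.Finite) : ∃ δ > 0, ∀ p ∈ P, ∀ q ∈ P, p ≠ q → δ ≤ dist p q := by
  have hpairs : {x : E × E | x.1 ∈ P ∧ x.2 ∈ P ∧ x.1 ≠ x.2}.Finite :=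
    (hP.prod hP).subset fun x hx => ⟨hx.1, hx.2.1⟩
  have hsmall : ∀ᶠ δ in 𝓝[>] (0 : ℝ), 0 < δ ∧
      ∀ x ∈ {x : E × E | x.1 ∈ P ∧ x.2 ∈ P ∧ x.1 ≠ x.2}, δ ≤ dist x.1 x.2 :=
    eventually_mem_nhdsWithin.and <| hpairs.eventually_all.2 fun x hx =>
      nhdsWithin_le_nhds <| (eventually_lt_nhds (dist_pos.2 hx.2.2)).mono fun _ h => h.le
  obtain ⟨δ, hδ, h⟩ := hsmall.exists
  exact ⟨δ, hδ, fun p hp q hq hpq => h (p, q) ⟨hp, hq, hpq⟩⟩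

theorem eventually_measure_setOf_ne_zero {Ω ι : Type*} [MeasurableSpace Ω] {μ : Measure Ω}
    {l : Filter ι} [l.IsCountablyGenerated] {p : ι → Ω → Prop} {A : Set Ω} (hA : μ A ≠ 0)
    (h : ∀ ω ∈ A, ∀ᶠ i in l, p i ω) : ∀ᶠ i in l, μ {ω | p i ω} ≠ 0 := by
  obtain ⟨V, hV⟩ := l.exists_antitone_basis
  have hcover : A ⊆ ⋃ n, {ω | ∀ i ∈ V n, p i ω} := fun ω hω => by
    obtain ⟨n, hn⟩ := hV.mem_iff.1 (h ω hω)
    exact mem_iUnion.2 ⟨n, hn⟩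
  obtain ⟨n, hn⟩ : ∃ n, μ {ω | ∀ i ∈ V n, p i ω} ≠ 0 := by
    by_contra! h0
    exact hA (measure_mono_null hcover (measure_iUnion_null h0))
  exact mem_of_superset (hV.mem n) fun i hi h0 => hn (measure_mono_null (fun ω hω => hω i hi) h0)

theorem subset_biUnion_and_inter_eq_singleton_of_ncard_le {α ι : Type*} {S : Set α} {P : Set ι}
    {U : ι → Set α} (hS : S.Finite) (hU : P.PairwiseDisjoint U)
    (hne : ∀ p ∈ P, (S ∩ U p).Nonempty) (hcard : S.ncard ≤ P.ncard) :
    S ⊆ ⋃ p ∈ P, U p ∧ ∀ p ∈ P, ∃ y, S ∩ U p = {y} := by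
  rcases isEmpty_or_nonempty α with hα | hα
  · exact ⟨fun x => isEmptyElim x, fun p hp => (hne p hp).elim fun x _ => isEmptyElim x⟩
  choose! q hqS hqU using hne
  have hinj : InjOn q P := fun p hp p' hp' h =>
    hU.elim hp hp' (not_disjoint_iff.2 ⟨q p, hqU p hp, h ▸ hqU p' hp'⟩)
  have himage : q '' P = S :=
    eq_of_subset_of_ncard_le (image_subset_iff.2 hqS) (by rwa [hinj.ncard_image]) hS
  have hunique : ∀ p ∈ P, ∀ y ∈ S ∩ U p, y = q p := by
    rintro p hp y ⟨hyS, hyU⟩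
    rw [← himage] at hyS
    obtain ⟨p', hp', rfl⟩ := hyS
    rw [hU.elim hp' hp (not_disjoint_iff.2 ⟨q p', hqU p' hp', hyU⟩)]
  refine ⟨fun y hy => ?_, fun p hp =>
    ⟨q p, eq_singleton_iff_unique_mem.2 ⟨⟨hqS p hp, hqU p hp⟩, hunique p hp⟩⟩⟩
  rw [← himage] at hy
  obtain ⟨p, hp, rfl⟩ := hy
  exact mem_biUnion hp (hqU p hp)

section Trapping

variable {T : Type*} [ConditionallyCompleteLinearOrder T] [TopologicalSpace T] [OrderTopology T]
  [DenselyOrdered T]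

theorem Continuous.mapsTo_Icc_of_dense {Y : Type*} [TopologicalSpace Y] {γ : T → Y}
    (hγ : Continuous γ) {F F' : Set Y} (hF : IsClosed F) (hF' : IsClosed F')
    (hFF' : Disjoint F F') {D : Set T} (hD : Dense D) {a b : T} (ha : γ a ∈ F)
    (h : ∀ s ∈ D ∩ Ioo a b, γ s ∈ F ∪ F') : MapsTo γ (Icc a b) F := by
  intro s hs
  rcases (hs.1.trans hs.2).eq_or_lt with rfl | hab
  · rwa [le_antisymm hs.2 hs.1]
  have hcl : Icc a b ⊆ closure (Ioo a b ∩ D) := by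
    rw [← closure_Ioo hab.ne]
    exact closure_minimal (hD.open_subset_closure_inter isOpen_Ioo) isClosed_closure
  have himage : γ '' Icc a b ⊆ F ∪ F' := image_subset_iff.2 fun r hr =>
    (hF.union hF').closure_subset (map_mem_closure hγ (hcl hr) fun r hr => h r ⟨hr.2, hr.1⟩)
  rcases isPreconnected_iff_subset_of_disjoint_closed.1
      (isPreconnected_Icc.image γ hγ.continuousOn) F F' hF hF' himage
      (by rw [hFF'.inter_eq, inter_empty]) with hsub | hsub
  · exact hsub (mem_image_of_mem γ hs)
  · exact absurd (hsub (mem_image_of_mem γ (left_mem_Icc.2 hab.le)))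
      (hFF'.notMem_of_mem_left ha)

theorem Continuous.mem_ball_of_dense {E : Type*} [PseudoMetricSpace E] {γ : T → E}
    (hγ : Continuous γ) {P : Set E} (hP : P.Finite) {ε : ℝ}
    (hsep : ∀ p ∈ P, ∀ q ∈ P, p ≠ q → 3 * ε ≤ dist p q) {D : Set T} (hD : Dense D) {a b : T}
    (hab : a ≤ b) (ha : γ a ∈ P) (h : ∀ s ∈ D ∩ Ioo a b, γ s ∈ ⋃ q ∈ P, ball q ε)
    (hb : γ b ∈ ⋃ q ∈ P, ball q ε) : γ b ∈ ball (γ a) ε := by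
  obtain ⟨q, hq, hbq⟩ := mem_iUnion₂.1 hb
  have hε : 0 < ε := pos_of_mem_ball hbq
  have hdisj : ∀ p ∈ P, ∀ q ∈ P, p ≠ q → Disjoint (closedBall p ε) (closedBall q ε) :=
    fun p hp q hq hpq => closedBall_disjoint_closedBall (by linarith [hsep p hp q hq hpq])
  have hcover : ⋃ q ∈ P, ball q ε ⊆ closedBall (γ a) ε ∪ ⋃ q ∈ P \ {γ a}, closedBall q ε := by
    refine iUnion₂_subset fun q hq => ball_subset_closedBall.trans ?_
    rcases eq_or_ne q (γ a) with rfl | hne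
    · exact subset_union_left
    · exact (subset_biUnion_of_mem (u := fun q => closedBall q ε)
        (show q ∈ P \ {γ a} from ⟨hq, hne⟩)).trans subset_union_right
  have hmaps := hγ.mapsTo_Icc_of_dense isClosed_closedBall
    (hP.sdiff.isClosed_biUnion fun _ _ => isClosed_closedBall)
    (disjoint_iUnion₂_right.2 fun q hq => hdisj _ ha q hq.1 fun h => hq.2 h.symm) hD
    (mem_closedBall_self hε.le) (fun s hs => hcover (h s hs)) ⟨hab, le_rfl⟩
  rcases eq_or_ne q (γ a) with rfl | hne
  · exact hbq
  · exact absurd (hdisj _ ha q hq hne.symm)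
      (not_disjoint_iff.2 ⟨γ b, hmaps, ball_subset_closedBall hbq⟩)

end Trapping

section Determined

variable {T Y : Type*} [TopologicalSpace T] [TopologicalSpace Y] [MeasurableSpace C(T, Y)]

def EvalDetermines (η : Measure C(T, Y)) (s t : T) : Prop :=
  ∃ f : Y → Y, ∀ᵐ γ ∂η, γ t = f (γ s)

theorem EvalDetermines.refl (η : Measure C(T, Y)) (s : T) : EvalDetermines η s s :=
  ⟨id, ae_of_all _ fun _ => rfl⟩

theorem EvalDetermines.trans {η : Measure C(T, Y)} {r s t : T} (hrs : EvalDetermines η r s)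
    (hst : EvalDetermines η s t) : EvalDetermines η r t := by
  obtain ⟨f, hf⟩ := hrs
  obtain ⟨g, hg⟩ := hst
  exact ⟨g ∘ f, by filter_upwards [hf, hg] with γ h₁ h₂ using h₂.trans (congrArg g h₁)⟩

variable [T2Space Y]

theorem exists_ae_eqOn_closure_of_evalDetermines {η : Measure C(T, Y)} {s : T} {D : Set T}
    (hD : D.Countable) (h : ∀ t ∈ D, EvalDetermines η s t) :
    ∃ g : Y → C(T, Y), ∀ᵐ γ : C(T, Y) ∂η, EqOn γ (g (γ s)) (closure D) := by
  classical
  choose f hf using h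
  set G := {γ : C(T, Y) | ∀ t (ht : t ∈ D), γ t = f t ht (γ s)}
  have hG : ∀ᵐ γ ∂η, γ ∈ G := (ae_ball_iff hD).2 hf
  refine ⟨fun y => if h : ∃ γ ∈ G, γ s = y then h.choose else ContinuousMap.const T y, ?_⟩
  filter_upwards [hG] with γ hγ
  have h : ∃ γ' ∈ G, γ' s = γ s := ⟨γ, hγ, rfl⟩
  obtain ⟨hG', hs'⟩ := h.choose_spec
  simp only [dif_pos h]
  refine EqOn.closure (fun t ht => ?_) γ.continuous h.choose.continuous
  rw [hγ t ht, hG' t ht, hs']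

theorem isClosed_setOf_evalDetermines [FrechetUrysohnSpace T] (η : Measure C(T, Y)) (s : T) :
    IsClosed {t | EvalDetermines η s t} := by
  refine isClosed_of_closure_subset fun t ht => ?_
  obtain ⟨x, hx, hxt⟩ := mem_closure_iff_seq_limit.1 ht
  obtain ⟨g, hg⟩ := exists_ae_eqOn_closure_of_evalDetermines (countable_range x)
    (forall_mem_range.2 hx)
  exact ⟨fun y => g y t, hg.mono fun γ hγ =>
    hγ (mem_closure_of_tendsto hxt (Eventually.of_forall fun n => mem_range_self n))⟩

theorem exists_ae_eq_of_forall_evalDetermines [TopologicalSpace.SeparableSpace T]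
    {η : Measure C(T, Y)} {s : T} (h : ∀ t, EvalDetermines η s t) :
    ∃ g : Y → C(T, Y), ∀ᵐ γ ∂η, γ = g (γ s) := by
  obtain ⟨D, hDc, hDd⟩ := TopologicalSpace.exists_countable_dense T
  obtain ⟨g, hg⟩ := exists_ae_eqOn_closure_of_evalDetermines hDc fun t _ => h t
  refine ⟨g, ?_⟩
  filter_upwards [hg] with γ hγ
  exact ContinuousMap.ext fun t => hγ (hDd t)

end Determined

section Marginal

variable {T Y : Type*} [TopologicalSpace T] [TopologicalSpace Y] [MeasurableSpace Y]
  [MeasurableSpace C(T, Y)]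

noncomputable def marginal (η : Measure C(T, Y)) (t : T) : Measure Y :=
  η.map fun γ => γ t

theorem marginal_apply {η : Measure C(T, Y)} {t : T}
    (hae : AEMeasurable (fun γ : C(T, Y) => γ t) η) {B : Set Y} (hB : MeasurableSet B) :
    marginal η t B = η {γ | γ t ∈ B} :=
  Measure.map_apply_of_aemeasurable hae hB

theorem ae_mem_support_marginal [HereditarilyLindelofSpace Y] {η : Measure C(T, Y)} {t : T}
    (hae : AEMeasurable (fun γ : C(T, Y) => γ t) η) :
    ∀ᵐ γ ∂η, γ t ∈ (marginal η t).support :=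
  ae_of_ae_map hae Measure.support_mem_ae

theorem eventually_marginal_ne_zero [FirstCountableTopology T] [OpensMeasurableSpace Y]
    [MeasurableSingletonClass Y] {η : Measure C(T, Y)}
    (hae : ∀ t, AEMeasurable (fun γ : C(T, Y) => γ t) η) {t₀ : T} {x : Y}
    (hx : marginal η t₀ {x} ≠ 0) {U : Set Y} (hU : IsOpen U) (hxU : x ∈ U) :
    ∀ᶠ t in 𝓝 t₀, marginal η t U ≠ 0 := by
  rw [marginal_apply (hae t₀) (measurableSet_singleton x)] at hx
  filter_upwards [eventually_measure_setOf_ne_zero hx fun γ hγ =>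
    γ.continuous.continuousAt.eventually_mem (hU.mem_nhds (by rwa [mem_singleton_iff.1 hγ]))]
    with t ht
  rwa [marginal_apply (hae t) hU.measurableSet]

end Marginal

section Propagation

variable {T E : Type*} [MetricSpace E] [SecondCountableTopology E] [MeasurableSpace E]
  [BorelSpace E]

theorem eventually_support_marginal_subset_and_inter_ball_eq_singleton [TopologicalSpace T]
    [LinearOrder T] [FirstCountableTopology T] [MeasurableSpace C(T, E)] {η : Measure C(T, E)}
    (hae : ∀ t, AEMeasurable (fun γ : C(T, E) => γ t) η)
    (hfin : ∀ t, (marginal η t).support.Finite)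
    (hanti : Antitone fun t => (marginal η t).support.ncard) {t₀ : T} {ε : ℝ} (hε : 0 < ε)
    (hsep : ∀ p ∈ (marginal η t₀).support, ∀ q ∈ (marginal η t₀).support, p ≠ q →
      2 * ε ≤ dist p q) :
    ∀ᶠ t in 𝓝[>] t₀, (marginal η t).support ⊆ ⋃ p ∈ (marginal η t₀).support, ball p ε ∧
      ∀ p ∈ (marginal η t₀).support, ∃ y, (marginal η t).support ∩ ball p ε = {y} := by
  have hpos : ∀ᶠ t in 𝓝[>] t₀, ∀ p ∈ (marginal η t₀).support, marginal η t (ball p ε) ≠ 0 :=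
    (hfin t₀).eventually_all.2 fun p hp => nhdsWithin_le_nhds <| eventually_marginal_ne_zero hae
      (Measure.measure_singleton_ne_zero_of_mem_support (hfin t₀) hp) isOpen_ball
      (mem_ball_self hε)
  filter_upwards [hpos, eventually_mem_nhdsWithin] with t ht htt₀
  refine subset_biUnion_and_inter_eq_singleton_of_ncard_le (hfin t)
    (fun p hp q hq hpq => ball_disjoint_ball (by linarith [hsep p hp q hq hpq]))
    (fun p hp => ?_) (hanti (le_of_lt htt₀))
  rw [inter_comm]
  exact Measure.nonempty_inter_support_of_pos (pos_iff_ne_zero.2 (ht p hp))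

variable [ConditionallyCompleteLinearOrder T] [TopologicalSpace T] [OrderTopology T]
  [DenselyOrdered T] [FirstCountableTopology T] [MeasurableSpace C(T, E)] {η : Measure C(T, E)}

theorem eventually_evalDetermines [NoMaxOrder T] [TopologicalSpace.SeparableSpace T]
    (hae : ∀ t, AEMeasurable (fun γ : C(T, E) => γ t) η)
    (hfin : ∀ t, (marginal η t).support.Finite)
    (hanti : Antitone fun t => (marginal η t).support.ncard) (t₀ : T) :
    ∀ᶠ t in 𝓝[>] t₀, EvalDetermines η t₀ t := by
  obtain ⟨δ, hδ, hsep⟩ := (hfin t₀).exists_pos_forall_le_dist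
  obtain ⟨u, hu, hgood⟩ := mem_nhdsGT_iff_exists_Ioo_subset.1
    (eventually_support_marginal_subset_and_inter_ball_eq_singleton hae hfin hanti
      (ε := δ / 3) (by positivity) fun p hp q hq hpq => by linarith [hsep p hp q hq hpq])
  filter_upwards [Ioo_mem_nhdsGT hu] with t ht
  choose! f hf using (hgood ht).2
  obtain ⟨D, hDc, hDd⟩ := TopologicalSpace.exists_countable_dense T
  have hD : ∀ᵐ γ ∂η, ∀ d ∈ D, γ d ∈ (marginal η d).support :=
    (ae_ball_iff hDc).2 fun d _ => ae_mem_support_marginal (hae d)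
  refine ⟨f, ?_⟩
  filter_upwards [ae_mem_support_marginal (hae t₀), ae_mem_support_marginal (hae t), hD]
    with γ h₀ ht' hγD
  have hball := γ.continuous.mem_ball_of_dense (hfin t₀)
    (fun p hp q hq hpq => by linarith [hsep p hp q hq hpq]) hDd ht.1.le h₀
    (fun s hs => (hgood ⟨hs.2.1, hs.2.2.trans ht.2⟩).1 (hγD s hs.1)) ((hgood ht).1 ht')
  have hmem : γ t ∈ (marginal η t).support ∩ ball (γ t₀) (δ / 3) := ⟨ht', hball⟩
  rwa [hf _ h₀] at hmem

theorem evalDetermines_of_le [NoMaxOrder T] [TopologicalSpace.SeparableSpace T]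
    (hae : ∀ t, AEMeasurable (fun γ : C(T, E) => γ t) η)
    (hfin : ∀ t, (marginal η t).support.Finite)
    (hanti : Antitone fun t => (marginal η t).support.ncard) {s t : T} (hst : s ≤ t) :
    EvalDetermines η s t :=
  ((isClosed_setOf_evalDetermines η s).inter isClosed_Icc).Icc_subset_of_forall_mem_nhdsWithin
    (EvalDetermines.refl η s)
    (fun r hr => (eventually_evalDetermines hae hfin hanti r).mono fun _ h => hr.1.trans h)
    ⟨hst, le_rfl⟩

end Propagation

theorem MeasureTheory.Measure.ext_of_ae_eq_comp {Ω E : Type*} [MeasurableSpace Ω]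
    [TopologicalSpace E] [HereditarilyLindelofSpace E] [MeasurableSpace E]
    [MeasurableSingletonClass E] {η₁ η₂ : Measure Ω} {π : Ω → E} {g : E → Ω}
    (h₁ : AEMeasurable π η₁) (h₂ : AEMeasurable π η₂) (hmap : η₁.map π = η₂.map π)
    (hS : (η₁.map π).support.Countable) (hg₁ : ∀ᵐ ω ∂η₁, ω = g (π ω))
    (hg₂ : ∀ᵐ ω ∂η₂, ω = g (π ω)) : η₁ = η₂ := by
  set S := (η₁.map π).support
  have key : ∀ η : Measure Ω, AEMeasurable π η → η.map π = η₁.map π →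
      (∀ᵐ ω ∂η, ω = g (π ω)) → ∀ A, η A = η₁.map π (g ⁻¹' A ∩ S) := by
    -- `g ⁻¹' A` need not be measurable, but its trace on the countable set `S` is.
    intro η hπ hmapη hg A
    rw [← hmapη, map_apply_of_aemeasurable hπ (hS.mono inter_subset_right).measurableSet]
    have hsupp : ∀ᵐ ω ∂η, π ω ∈ S := ae_of_ae_map hπ (hmapη ▸ Measure.support_mem_ae)
    refine measure_congr ?_
    filter_upwards [hg, hsupp] with ω hω hωS
    change (ω ∈ A) = (g (π ω) ∈ A ∧ π ω ∈ S)
    rw [← hω, eq_iff_iff, and_iff_left hωS]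
  ext A -
  rw [key η₁ h₁ rfl hg₁, key η₂ h₂ hmap.symm hg₂]

theorem stmt11_general [MeasurableSpace C(Set.Ici (0:ℝ), X)]
    (μ : Set.Ici (0:ℝ) → Measure X) (hμ : ∀ t, MemP2 (μ t))
    (hfin : ∀ t, (msupport (μ t)).Finite)
    (hmono : ∀ s t : Set.Ici (0:ℝ), s ≤ t →
      (msupport (μ t)).ncard ≤ (msupport (μ s)).ncard)
    (η₁ η₂ : Measure C(Set.Ici (0:ℝ), X))
    (h₁ : ∀ t : Set.Ici (0:ℝ), η₁.map (fun γ : C(Set.Ici (0:ℝ), X) => γ t) = μ t)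
    (h₂ : ∀ t : Set.Ici (0:ℝ), η₂.map (fun γ : C(Set.Ici (0:ℝ), X) => γ t) = μ t) :
    η₁ = η₂ := by
  have hae : ∀ η : Measure C(Set.Ici (0:ℝ), X), (∀ t, η.map (fun γ => γ t) = μ t) →
      ∀ t, AEMeasurable (fun γ : C(Set.Ici (0:ℝ), X) => γ t) η := fun η h t => by
    have := (hμ t).1
    exact .of_map_ne_zero (h t ▸ IsProbabilityMeasure.ne_zero (μ t))
  have hsupp : ∀ t, (marginal (η₁ + η₂) t).support = msupport (μ t) := fun t => by
    rw [marginal, (hae η₁ h₁ t).map_add₀ (hae η₂ h₂ t), h₁, h₂, Measure.support_add, union_self,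
      msupport_eq_support]
  -- makes `Set.Ici 0` a `ConditionallyCompleteLinearOrder`
  have : Inhabited (Set.Ici (0:ℝ)) := ⟨⊥⟩
  obtain ⟨g, hg⟩ := exists_ae_eq_of_forall_evalDetermines fun t =>
    evalDetermines_of_le (fun t => (hae η₁ h₁ t).add_measure (hae η₂ h₂ t))
      (fun t => hsupp t ▸ hfin t) (fun s t hst => by simpa only [hsupp] using hmono s t hst)
      (bot_le (a := t))
  refine Measure.ext_of_ae_eq_comp (hae η₁ h₁ ⊥) (hae η₂ h₂ ⊥) ((h₁ ⊥).trans (h₂ ⊥).symm) ?_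
    (ae_add_measure_iff.1 hg).1 (ae_add_measure_iff.1 hg).2
  rw [h₁, ← msupport_eq_support]
  exact (hfin ⊥).countable

/-- If `μ : [0,∞) → P₂(X)` has finite support of non-increasing
cardinality, then there is at most one `η ∈ P(C([0,∞);X))` with `(e_t)_♯η = μ_t`
for all `t ≥ 0`. -/
theorem stmt11 [MeasurableSpace C(Set.Ici (0:ℝ), X)]
    (μ : Set.Ici (0:ℝ) → Measure X) (hμ : ∀ t, MemP2 (μ t))
    (hfin : ∀ t, (msupport (μ t)).Finite)
    (hmono : ∀ s t : Set.Ici (0:ℝ), s ≤ t →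
      (msupport (μ t)).ncard ≤ (msupport (μ s)).ncard)
    (η₁ η₂ : Measure C(Set.Ici (0:ℝ), X))
    [IsProbabilityMeasure η₁] [IsProbabilityMeasure η₂]
    (h₁ : ∀ t : Set.Ici (0:ℝ), η₁.map (fun γ : C(Set.Ici (0:ℝ), X) => γ t) = μ t)
    (h₂ : ∀ t : Set.Ici (0:ℝ), η₂.map (fun γ : C(Set.Ici (0:ℝ), X) => γ t) = μ t) :
    η₁ = η₂ :=
  stmt11_general μ hμ hfin hmono η₁ η₂ h₁ h₂
end

section
/- Let (U, 𝕌) be a probability space, g: X×U → X a Borel map with ∫_U |g(x,u)|² d𝕌(u) ≤ L(1+|x|²) for some L > 0 and all x ∈ X, and define the probability vector field F[μ] := (π⁰, g)_♯(μ ⊗ 𝕌) ∈ P₂(TX) for μ ∈ P₂(X), where π⁰(x,u) = x. Let (Ω, P) be a probability space, X⁰ ∈ L²(Ω,P;X), τ > 0, N ∈ ℕ, and let V⁰,…,V^{N−1}: Ω → U be random variables with (Vᵏ)_♯P = 𝕌 for every k and such that X⁰, V⁰,…,V^{N−1} are independent; define recursively X^{n+1} := Xⁿ + τ g(Xⁿ,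 Vⁿ). Let M⁰ := (X⁰)_♯P and M^{n+1} := exp^τ_♯F[Mⁿ], and let α_τ ∈ P(X^{N+1}) be the multi-step plan associated with (F[Mⁿ])_{0≤n≤N−1}. Then: (1) (Xⁿ)_♯P = Mⁿ for every 0 ≤ n ≤ N; (2) (X⁰, X¹, …, X^N)_♯P = α_τ; consequently, the law of the piecewise-affine interpolation G(X⁰,…,X^N) equals η_τ := G_♯α_τ. -/
open MeasureTheory ProbabilityTheory
open scoped ENNReal

variable {X : Type*} [NormedAddCommGroup X] [InnerProductSpace ℝ X]
  [CompleteSpace X] [SecondCountableTopology X] [MeasurableSpace X] [BorelSpace X]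

/-!
The state `Xⁿ`, and indeed the whole path `(X⁰, …, Xⁿ)`, is a measurable function
(`eulerPath`) of `X⁰` and the first `n` noises, so by independence the noise `Vⁿ` is
independent of the past path and the law of (path, `Vⁿ`) is a product measure. Pushing
`(Mⁿ ⊗ 𝕌)` forward by one Euler step gives (1) by induction. For (2), uniqueness of
disintegrations identifies the kernel `κ n` with `x ↦ (x + τ g(x, ·))_♯𝕌` only `Mⁿ`-a.e.;
this suffices because by (1) the last point of the path has law `Mⁿ`, and then appending one
Euler step to the path is exactly the bind that defines the multi-step plan. (3) is the
pushforward of (2) by `G`.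
-/

section Generic

variable {Y U : Type*} [MeasurableSpace Y] [MeasurableSpace U]

@[fun_prop]
lemma Measurable.finSnoc {Z : Type*} [MeasurableSpace Z] {n : ℕ} {f : Z → Fin n → Y} {g : Z → Y}
    (hf : Measurable f) (hg : Measurable g) :
    Measurable fun z => (Fin.snoc (f z) (g z) : Fin (n + 1) → Y) := by
  refine measurable_pi_lambda _ fun i => Fin.lastCases ?_ (fun j => ?_) i
  · simpa only [Fin.snoc_last] using hg
  · simpa only [Fin.snoc_castSucc] using hf.eval (a := j)

@[fun_prop]
lemma Measurable.vecCons {Z : Type*} [MeasurableSpace Z] {n : ℕ} {f : Z → Y} {g : Z → Fin n → Y}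
    (hf : Measurable f) (hg : Measurable g) :
    Measurable fun z => Matrix.vecCons (f z) (g z) := by
  refine measurable_pi_lambda _ fun i => Fin.cases ?_ (fun j => ?_) i
  · simpa only [Matrix.cons_val_zero] using hf
  · simpa only [Matrix.cons_val_succ] using hg.eval (a := j)

lemma MeasureTheory.Measure.map_prod_eq_bind {Z : Type*} [MeasurableSpace Z]
    (ρ : Measure Y) (ν : Measure U) [SFinite ν] {f : Y × U → Z} (hf : Measurable f) :
    (ρ.prod ν).map f = ρ.bind fun y => ν.map fun u => f (y, u) := by
  ext s hs
  rw [Measure.map_apply hf hs, Measure.prod_apply (hf hs), Measure.bind_apply hs]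
  · refine lintegral_congr fun y => ?_
    rw [Measure.map_apply (by fun_prop) hs]
    rfl
  · have : (fun y => ν.map fun u => f (y, u)) = fun y => (ν.map (Prod.mk y)).map f :=
      funext fun y => (Measure.map_map hf measurable_prodMk_left).symm
    rw [this]
    exact ((Measure.measurable_map f hf).comp Measurable.map_prodMk_left).aemeasurable

lemma ae_eq_map_of_compProd_eq [MeasurableSpace.CountablyGenerated Y] {μ : Measure Y}
    [IsFiniteMeasure μ] {ν : Measure U} [IsFiniteMeasure ν] {F : Y × U → Y}
    (hF : Measurable F) {κ : Kernel Y Y} [IsFiniteKernel κ]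
    (h : μ ⊗ₘ κ = (μ.prod ν).map fun p => (p.1, F p)) :
    ∀ᵐ y ∂μ, κ y = ν.map fun u => F (y, u) := by
  let η : Kernel Y Y := (Kernel.id ×ₖ Kernel.const Y ν).map F
  have hη : ∀ y, η y = ν.map fun u => F (y, u) := fun y => by
    rw [Kernel.map_apply _ hF, Kernel.prod_apply, Kernel.id_apply, Kernel.const_apply,
      Measure.dirac_prod, Measure.map_map hF measurable_prodMk_left]
    rfl
  have : μ ⊗ₘ η = (μ.prod ν).map fun p => (p.1, F p) := by
    ext s hs
    rw [Measure.compProd_apply hs, Measure.map_apply (measurable_fst.prodMk hF) hs,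
      Measure.prod_apply (measurable_fst.prodMk hF hs)]
    refine lintegral_congr fun y => ?_
    rw [hη, Measure.map_apply (by fun_prop) (measurable_prodMk_left hs)]
    rfl
  filter_upwards [Kernel.ae_eq_of_compProd_eq (h.trans this.symm)] with y hy
  rw [hy, hη]

lemma map_prod_snoc_eq_bind {n : ℕ} (ρ : Measure (Fin (n + 1) → Y)) (ν : Measure U) [SFinite ν]
    {F : Y × U → Y} (hF : Measurable F) {κ : Kernel Y Y}
    (h : ∀ᵐ y ∂ρ.map (fun xs => xs (Fin.last n)), κ y = ν.map fun u => F (y, u)) :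
    (ρ.prod ν).map (fun q => Fin.snoc q.1 (F (q.1 (Fin.last n), q.2)))
      = ρ.bind fun xs => (κ (xs (Fin.last n))).map (Fin.snoc (α := fun _ => Y) xs) := by
  rw [Measure.map_prod_eq_bind _ _ (by fun_prop)]
  refine Measure.bind_congr_right ?_
  filter_upwards [ae_of_ae_map (measurable_pi_apply _).aemeasurable h] with xs hxs
  rw [hxs, Measure.map_map (by fun_prop) (by fun_prop)]
  rfl

end Generic

section Independence

variable {Ω A B C : Type*} [MeasurableSpace Ω] [MeasurableSpace A] [MeasurableSpace B]
  [MeasurableSpace C] {P : Measure Ω} [IsFiniteMeasure P]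

lemma indepFun_prodMk_left_of_indepFun_prodMk_right {a : Ω → A} {b : Ω → B} {c : Ω → C}
    (ha : Measurable a) (hb : Measurable b) (hc : Measurable c)
    (habc : IndepFun a (fun ω => (b ω, c ω)) P) (hbc : IndepFun b c P) :
    IndepFun (fun ω => (a ω, b ω)) c P := by
  have hab : IndepFun a b P := habc.comp measurable_id measurable_fst
  rw [indepFun_iff_map_prod_eq_prod_map_map] at habc hbc hab ⊢
  · have hassoc : P.map (fun ω => ((a ω, b ω), c ω))
        = (P.map fun ω => (a ω, (b ω, c ω))).map MeasurableEquiv.prodAssoc.symm := by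
      rw [Measure.map_map MeasurableEquiv.prodAssoc.symm.measurable (by fun_prop)]
      rfl
    rw [hassoc, habc, hbc, hab, ← (measurePreserving_prodAssoc _ _ _).map_eq,
      MeasurableEquiv.map_symm_map]
  all_goals fun_prop

lemma ProbabilityTheory.iIndepFun.indepFun_prodMk_prefix {U : Type*} [MeasurableSpace U] {K : ℕ}
    {V : Fin (K + 1) → Ω → U} (hVm : ∀ k, Measurable (V k)) (hV : iIndepFun V P)
    {Z : Ω → A} (hZ : Measurable Z) (hZV : IndepFun Z (fun ω k => V k ω) P)
    (n : ℕ) (hn : n < K + 1) :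
    IndepFun (fun ω => (Z ω, fun i : Fin n => V (Fin.castLE hn.le i) ω)) (V ⟨n, hn⟩) P := by
  have hdisj : Disjoint (Finset.univ.image (Fin.castLE hn.le)) {(⟨n, hn⟩ : Fin (K + 1))} := by
    simpa [Fin.ext_iff] using fun i : Fin n => i.isLt.ne
  have hprefix : IndepFun (fun ω (i : Fin n) => V (Fin.castLE hn.le i) ω) (V ⟨n, hn⟩) P := by
    have hrestrict : Measurable fun (v : Finset.univ.image (Fin.castLE hn.le) → U) (i : Fin n) =>
        v ⟨Fin.castLE hn.le i, by simp⟩ := by fun_prop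
    have heval : Measurable fun (v : ({⟨n, hn⟩} : Finset (Fin (K + 1))) → U) =>
        v ⟨⟨n, hn⟩, by simp⟩ := by fun_prop
    exact (hV.indepFun_finset _ _ hdisj hVm).comp hrestrict heval
  have hZ_prefix_last : IndepFun Z
      (fun ω => (fun i : Fin n => V (Fin.castLE hn.le i) ω, V ⟨n, hn⟩ ω)) P := by
    have hsplit : Measurable fun v : Fin (K + 1) → U =>
        (fun i : Fin n => v (Fin.castLE hn.le i), v ⟨n, hn⟩) := by fun_prop
    exact hZV.comp measurable_id hsplit
  exact indepFun_prodMk_left_of_indepFun_prodMk_right hZ (by fun_prop) (hVm _)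
    hZ_prefix_last hprefix

end Independence

section EulerIteration

variable {Ω U Y : Type*} {F : Y × U → Y} {X0 : Ω → Y} {K : ℕ} {V : Fin (K + 1) → Ω → U}
  {XX : ℕ → Ω → Y}

def eulerPath (F : Y × U → Y) : (n : ℕ) → Y × (Fin n → U) → Fin (n + 1) → Y
  | 0 => fun p _ => p.1
  | n + 1 => fun p =>
      let xs := eulerPath F n (p.1, Fin.init p.2)
      Fin.snoc xs (F (xs (Fin.last n), p.2 (Fin.last n)))

structure IsEulerIteration (F : Y × U → Y) (X0 : Ω → Y) (V : Fin (K + 1) → Ω → U)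
    (XX : ℕ → Ω → Y) : Prop where
  zero : XX 0 = X0
  succ : ∀ n (hn : n < K + 1), XX (n + 1) = fun ω => F (XX n ω, V ⟨n, hn⟩ ω)

namespace IsEulerIteration

lemma path_succ (h : IsEulerIteration F X0 V XX) (n : ℕ) (hn : n < K + 1) :
    (fun ω (i : Fin (n + 2)) => XX i ω)
      = fun ω => Fin.snoc (fun i : Fin (n + 1) => XX i ω) (F (XX n ω, V ⟨n, hn⟩ ω)) := by
  funext ω i
  refine Fin.lastCases ?_ (fun j => ?_) i
  · simp [h.succ n hn]
  · rw [Fin.snoc_castSucc]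
    rfl

lemma path_eq_eulerPath (h : IsEulerIteration F X0 V XX) :
    ∀ n (hn : n ≤ K + 1), (fun ω (i : Fin (n + 1)) => XX i ω)
      = fun ω => eulerPath F n (X0 ω, fun i : Fin n => V (Fin.castLE hn i) ω)
  | 0, _ => by
    funext ω i
    rw [Fin.fin_one_eq_zero i, ← h.zero]
    rfl
  | n + 1, hn => by
    have ih := h.path_eq_eulerPath n (by omega)
    rw [h.path_succ n (by omega)]
    funext ω
    have hlast : XX n ω = _ := congrFun (congrFun ih ω) (Fin.last n)
    rw [hlast, congrFun ih ω]
    rfl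

end IsEulerIteration

variable [MeasurableSpace Ω] [MeasurableSpace U] [MeasurableSpace Y]

lemma measurable_eulerPath {F : Y × U → Y} (hF : Measurable F) :
    ∀ n, Measurable (eulerPath F n)
  | 0 => measurable_pi_lambda _ fun _ => measurable_fst
  | n + 1 => by
    have hinit : Measurable fun p : Y × (Fin (n + 1) → U) => eulerPath F n (p.1, Fin.init p.2) :=
      (measurable_eulerPath hF n).comp
        (measurable_fst.prodMk (measurable_pi_lambda _ fun i => measurable_snd.eval))
    exact hinit.finSnoc (hF.comp (hinit.eval.prodMk measurable_snd.eval))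

def IsFreshNoise (P : Measure Ω) (X0 : Ω → Y) (V : Fin (K + 1) → Ω → U) : Prop :=
  ∀ n (hn : n < K + 1),
    IndepFun (fun ω => (X0 ω, fun i : Fin n => V (Fin.castLE hn.le i) ω)) (V ⟨n, hn⟩) P

namespace IsEulerIteration

lemma measurable_path (h : IsEulerIteration F X0 V XX) (hF : Measurable F)
    (hX0 : Measurable X0) (hV : ∀ k, Measurable (V k)) (n : ℕ) (hn : n ≤ K + 1) :
    Measurable fun ω (i : Fin (n + 1)) => XX i ω := by
  rw [h.path_eq_eulerPath n hn]
  exact (measurable_eulerPath hF n).comp (hX0.prodMk (measurable_pi_lambda _ fun i => hV _))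

lemma indepFun_path_noise (h : IsEulerIteration F X0 V XX) (hF : Measurable F)
    {P : Measure Ω} (hfresh : IsFreshNoise P X0 V) (n : ℕ) (hn : n < K + 1) :
    IndepFun (fun ω (i : Fin (n + 1)) => XX i ω) (V ⟨n, hn⟩) P := by
  rw [h.path_eq_eulerPath n hn.le]
  exact (hfresh n hn).comp (measurable_eulerPath hF n) measurable_id

variable {P : Measure Ω} [IsFiniteMeasure P] {𝕌 : Measure U}

lemma map_path_prodMk_noise (h : IsEulerIteration F X0 V XX) (hF : Measurable F)
    (hX0 : Measurable X0) (hV : ∀ k, Measurable (V k)) (hVlaw : ∀ k, P.map (V k) = 𝕌)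
    (hfresh : IsFreshNoise P X0 V) (n : ℕ) (hn : n < K + 1) :
    P.map (fun ω => (fun i : Fin (n + 1) => XX i ω, V ⟨n, hn⟩ ω))
      = (P.map fun ω (i : Fin (n + 1)) => XX i ω).prod 𝕌 := by
  rw [← hVlaw ⟨n, hn⟩]
  exact (h.indepFun_path_noise hF hfresh n hn).map_prod_eq_prod_map_map
    (h.measurable_path hF hX0 hV n hn.le).aemeasurable (hV _).aemeasurable

lemma map_prodMk_noise (h : IsEulerIteration F X0 V XX) (hF : Measurable F)
    (hX0 : Measurable X0) (hV : ∀ k, Measurable (V k)) (hVlaw : ∀ k, P.map (V k) = 𝕌)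
    (hfresh : IsFreshNoise P X0 V) (n : ℕ) (hn : n < K + 1) :
    P.map (fun ω => (XX n ω, V ⟨n, hn⟩ ω)) = (P.map (XX n)).prod 𝕌 := by
  have hlast : IndepFun (XX n) (V ⟨n, hn⟩) P :=
    (h.indepFun_path_noise hF hfresh n hn).comp (measurable_pi_apply (Fin.last n)) measurable_id
  rw [← hVlaw ⟨n, hn⟩]
  exact hlast.map_prod_eq_prod_map_map
    ((h.measurable_path hF hX0 hV n hn.le).eval (a := Fin.last n)).aemeasurable
    (hV _).aemeasurable

lemma map_eq (h : IsEulerIteration F X0 V XX) (hF : Measurable F)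
    (hX0 : Measurable X0) (hV : ∀ k, Measurable (V k)) (hVlaw : ∀ k, P.map (V k) = 𝕌)
    (hfresh : IsFreshNoise P X0 V) {M : ℕ → Measure Y} (hM0 : M 0 = P.map X0)
    (hMrec : ∀ n, M (n + 1) = ((M n).prod 𝕌).map F) :
    ∀ n ≤ K + 1, P.map (XX n) = M n
  | 0, _ => by rw [h.zero, hM0]
  | n + 1, hn => by
    have hXX : Measurable (XX n) :=
      (h.measurable_path hF hX0 hV n (by omega)).eval (a := Fin.last n)
    rw [h.succ n (by omega), hMrec, ← h.map_eq hF hX0 hV hVlaw hfresh hM0 hMrec n (by omega),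
      ← h.map_prodMk_noise hF hX0 hV hVlaw hfresh n (by omega),
      Measure.map_map hF (hXX.prodMk (hV _))]
    rfl

lemma map_path_eq_mstep [MeasurableSpace.CountablyGenerated Y] [IsFiniteMeasure 𝕌]
    (h : IsEulerIteration F X0 V XX) (hF : Measurable F)
    (hX0 : Measurable X0) (hV : ∀ k, Measurable (V k)) (hVlaw : ∀ k, P.map (V k) = 𝕌)
    (hfresh : IsFreshNoise P X0 V) {M : ℕ → Measure Y} (hlaw : ∀ n ≤ K + 1, P.map (XX n) = M n)
    {κ : ℕ → Kernel Y Y} [∀ n, IsFiniteKernel (κ n)]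
    (hdis : ∀ n, M n ⊗ₘ κ n = ((M n).prod 𝕌).map fun p => (p.1, F p)) :
    ∀ n ≤ K, P.map (fun ω (i : Fin (n + 2)) => XX i ω)
      = mstep (((M 0).prod 𝕌).map fun p => (p.1, F p)) κ n
  | 0, _ => by
    have hpath : (fun ω (i : Fin 2) => XX i ω) = fun ω => ![XX 0 ω, F (XX 0 ω, V 0 ω)] := by
      funext ω i
      fin_cases i
      · rfl
      · simp [h.succ 0 (by omega)]
    rw [hpath, mstep, Measure.map_map (by fun_prop) (by fun_prop), ← hlaw 0 (by omega),
      ← h.map_prodMk_noise hF hX0 hV hVlaw hfresh 0 (by omega),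
      Measure.map_map (by fun_prop) ((h.zero ▸ hX0).prodMk (hV _))]
    rfl
  | n + 1, hn => by
    have hmeas := h.measurable_path hF hX0 hV (n + 1) (by omega)
    have hρ := h.map_path_eq_mstep hF hX0 hV hVlaw hfresh hlaw hdis n (by omega)
    have hlast : (mstep (((M 0).prod 𝕌).map fun p => (p.1, F p)) κ n).map
        (fun xs => xs (Fin.last (n + 1))) = M (n + 1) := by
      rw [← hρ, Measure.map_map (measurable_pi_apply _) hmeas]
      exact hlaw (n + 1) (by omega)
    have : IsFiniteMeasure (M (n + 1)) := by
      rw [← hlaw (n + 1) (by omega)]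
      infer_instance
    rw [mstep, ← map_prod_snoc_eq_bind _ 𝕌 hF (hlast ▸ ae_eq_map_of_compProd_eq hF (hdis _)),
      ← hρ, ← h.map_path_prodMk_noise hF hX0 hV hVlaw hfresh (n + 1) (by omega),
      Measure.map_map (by fun_prop) (hmeas.prodMk (hV _)), h.path_succ (n + 1) (by omega)]
    rfl

end IsEulerIteration

end EulerIteration

theorem stmt14_general (U : Type*) [MeasurableSpace U] (𝕌 : Measure U) [IsProbabilityMeasure 𝕌]
    (g : X × U → X) (hg : Measurable g)
    (Ω : Type*) [MeasurableSpace Ω] (P : Measure Ω) [IsProbabilityMeasure P]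
    (X0 : Ω → X) (hX0m : Measurable X0)
    (τ : ℝ) (K : ℕ)
    (V : Fin (K + 1) → Ω → U) (hVm : ∀ k, Measurable (V k))
    (hVlaw : ∀ k, P.map (V k) = 𝕌)
    (hViid : iIndepFun V P)
    (hindep : IndepFun X0 (fun ω (k : Fin (K + 1)) => V k ω) P)
    (XX : ℕ → Ω → X) (hXX0 : XX 0 = X0)
    (hXXrec : ∀ n, (hn : n < K + 1) →
      XX (n + 1) = fun ω => XX n ω + τ • g (XX n ω, V ⟨n, hn⟩ ω))
    (M : ℕ → Measure X) (hM0 : M 0 = P.map X0)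
    (hMrec : ∀ n, M (n + 1)
        = ((M n).prod 𝕌).map (fun p : X × U => p.1 + τ • g p))
    (κ : ℕ → Kernel X X) (hκMarkov : ∀ n, IsMarkovKernel (κ n))
    (hdis : ∀ n, (M n).compProd (κ n)
        = ((M n).prod 𝕌).map (fun p : X × U => (p.1, p.1 + τ • g p))) :
    (∀ n ≤ K + 1, P.map (XX n) = M n) ∧
    (P.map (fun ω => fun i : Fin (K + 2) => XX i ω)
        = mstep (((M 0).prod 𝕌).map (fun p : X × U => (p.1, p.1 + τ • g p))) κ K) ∧
    (∀ {Tend : ℝ} (hTend : 0 ≤ Tend),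
      ∀ [MeasurableSpace C(Set.Icc (0:ℝ) Tend, X)],
      ∀ G : (Fin (K + 2) → X) → C(Set.Icc (0:ℝ) Tend, X), Measurable G →
        P.map (fun ω => G (fun i : Fin (K + 2) => XX i ω))
          = (mstep (((M 0).prod 𝕌).map (fun p : X × U => (p.1, p.1 + τ • g p))) κ K).map G) := by
  have hF : Measurable fun p : X × U => p.1 + τ • g p := by fun_prop
  have h : IsEulerIteration (fun p : X × U => p.1 + τ • g p) X0 V XX := ⟨hXX0, hXXrec⟩
  have hfresh : IsFreshNoise P X0 V := hViid.indepFun_prodMk_prefix hVm hX0m hindep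
  have hlaw := h.map_eq hF hX0m hVm hVlaw hfresh hM0 hMrec
  have := hκMarkov
  have hpath := h.map_path_eq_mstep hF hX0m hVm hVlaw hfresh hlaw hdis K le_rfl
  refine ⟨hlaw, hpath, fun _ _ G hG => ?_⟩
  rw [← hpath, Measure.map_map hG (h.measurable_path hF hX0m hVm (K + 1) le_rfl)]
  rfl

/-- Stochastic explicit Euler iterations
`X^{n+1} = Xⁿ + τ g(Xⁿ, Vⁿ)`, with `(Vᵏ)` i.i.d. of law `𝕌` independent of `X⁰`,
realize at the level of laws the Explicit Euler scheme for the PVF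
`F[μ] = (π⁰, g)_♯(μ ⊗ 𝕌)` : with `N = K + 1`, `Mⁿ⁺¹ = exp^τ_♯F[Mⁿ]`, `M⁰ = (X⁰)_♯P`
and `α_τ` the associated multi-step plan (built from disintegration kernels `κ n` of
the single-step plans), one has (1) `(Xⁿ)_♯P = Mⁿ` for all `n ≤ N` and
(2) `(X⁰,…,X^N)_♯P = α_τ`; consequently (3) the law of the piecewise-affine
interpolation `G(X⁰,…,X^N)` equals `η_τ = G_♯α_τ`. -/
theorem stmt14 (U : Type*) [MeasurableSpace U] (𝕌 : Measure U) [IsProbabilityMeasure 𝕌]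
    (g : X × U → X) (hg : Measurable g) (L : ℝ) (hL : 0 < L)
    (hgrowth : ∀ x : X, (∫ u, ‖g (x, u)‖ ^ 2 ∂𝕌) ≤ L * (1 + ‖x‖ ^ 2))
    (Ω : Type*) [MeasurableSpace Ω] (P : Measure Ω) [IsProbabilityMeasure P]
    (X0 : Ω → X) (hX0m : Measurable X0) (hX0L2 : Integrable (fun ω => ‖X0 ω‖ ^ 2) P)
    (τ : ℝ) (hτ : 0 < τ) (K : ℕ)
    (V : Fin (K + 1) → Ω → U) (hVm : ∀ k, Measurable (V k))
    (hVlaw : ∀ k, P.map (V k) = 𝕌)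
    (hViid : iIndepFun V P)
    (hindep : IndepFun X0 (fun ω (k : Fin (K + 1)) => V k ω) P)
    (XX : ℕ → Ω → X) (hXX0 : XX 0 = X0)
    (hXXrec : ∀ n, (hn : n < K + 1) →
      XX (n + 1) = fun ω => XX n ω + τ • g (XX n ω, V ⟨n, hn⟩ ω))
    (M : ℕ → Measure X) (hM0 : M 0 = P.map X0)
    (hMrec : ∀ n, M (n + 1)
        = ((M n).prod 𝕌).map (fun p : X × U => p.1 + τ • g p))
    (κ : ℕ → Kernel X X) (hκMarkov : ∀ n, IsMarkovKernel (κ n))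
    (hdis : ∀ n, (M n).compProd (κ n)
        = ((M n).prod 𝕌).map (fun p : X × U => (p.1, p.1 + τ • g p))) :
    (∀ n ≤ K + 1, P.map (XX n) = M n) ∧
    (P.map (fun ω => fun i : Fin (K + 2) => XX i ω)
        = mstep (((M 0).prod 𝕌).map (fun p : X × U => (p.1, p.1 + τ • g p))) κ K) ∧
    (∀ {Tend : ℝ} (hTend : 0 ≤ Tend),
      ∀ [MeasurableSpace C(Set.Icc (0:ℝ) Tend, X)],
      ∀ G : (Fin (K + 2) → X) → C(Set.Icc (0:ℝ) Tend, X), Measurable G →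
        P.map (fun ω => G (fun i : Fin (K + 2) => XX i ω))
          = (mstep (((M 0).prod 𝕌).map (fun p : X × U => (p.1, p.1 + τ • g p))) κ K).map G) :=
  stmt14_general U 𝕌 g hg Ω P X0 hX0m τ K V hVm hVlaw hViid hindep XX hXX0 hXXrec M hM0 hMrec κ
    hκMarkov hdis
end
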